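/- arXiv:2207.13160 — 7 statements merged into one kernel-verified Lean document; each statement's English description precedes it below -/
import Mathlib

section
/- Let P be a polynomial in two variables over ℂ such that the function z ↦ P(z, z̄) is not identically zero on the unit circle (i.e., there exists z₀ with |z₀| = 1 and P(z₀, conj z₀) ≠ 0). Then the set {z : ℂ | |z| = 1 and P(z, conj z) = 0} is finite. -/
/-!
On the unit circle `z̄ = z⁻¹`, so `P(z, z̄)` is a Laurent polynomial in `z`. Multiplying it by
`z ^ d`, where `d` bounds the degree of `P` in its second variable, clears the negative powers and
yields an honest polynomial in `z` with the same zeros on the circle. It is nonzero because it does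
not vanish at the given point `z₀`, so it has only finitely many roots.
-/

open ComplexConjugate Polynomial

namespace MvPolynomial

variable {K : Type*} [Field K]

noncomputable def clearInvDenom (P : MvPolynomial (Fin 2) K) : K[X] :=
  ∑ m ∈ P.support, Polynomial.C (coeff m P) * Polynomial.X ^ (m 0 + (P.degreeOf 1 - m 1))

theorem eval_clearInvDenom (P : MvPolynomial (Fin 2) K) {z : K} (hz : z ≠ 0) :
    (clearInvDenom P).eval z = z ^ P.degreeOf 1 * eval ![z, z⁻¹] P := by
  rw [clearInvDenom, eval_eq', Finset.mul_sum, Polynomial.eval_finsetSum]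
  refine Finset.sum_congr rfl fun m hm => ?_
  have hm1 : m 1 ≤ P.degreeOf 1 := monomial_le_degreeOf 1 hm
  simp only [Polynomial.eval_mul, Polynomial.eval_C, Polynomial.eval_pow, Polynomial.eval_X,
    Fin.prod_univ_two, Matrix.cons_val_zero, Matrix.cons_val_one, inv_pow, pow_add,
    pow_sub₀ z hz hm1]
  ring

theorem finite_setOf_eval_inv_eq_zero {P : MvPolynomial (Fin 2) K}
    {z₀ : K} (hz₀ : z₀ ≠ 0) (hP : eval ![z₀, z₀⁻¹] P ≠ 0) :
    {z : K | z ≠ 0 ∧ eval ![z, z⁻¹] P = 0}.Finite := by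
  have hne : clearInvDenom P ≠ 0 := fun h0 => by
    simpa [h0, hz₀, hP] using eval_clearInvDenom P hz₀
  refine (finite_setOfPred_isRoot hne).subset fun z ⟨hz, hPz⟩ => ?_
  simp [IsRoot, eval_clearInvDenom P hz, hPz]

end MvPolynomial

/-- If `P(z, z̄)` is not identically zero on the unit circle, then it has only
finitely many zeroes on the unit circle. -/
theorem finite_zeros_on_circle_of_not_identically_zero
    (P : MvPolynomial (Fin 2) ℂ)
    (h : ∃ z₀ : ℂ, ‖z₀‖ = 1 ∧ MvPolynomial.eval ![z₀, conj z₀] P ≠ 0) :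
    Set.Finite {z : ℂ | ‖z‖ = 1 ∧ MvPolynomial.eval ![z, conj z] P = 0} := by
  have ne_zero {z : ℂ} (hz : ‖z‖ = 1) : z ≠ 0 := norm_ne_zero_iff.mp (by simp [hz])
  obtain ⟨z₀, hz₀, hP₀⟩ := h
  rw [← Complex.inv_eq_conj hz₀] at hP₀
  refine (MvPolynomial.finite_setOf_eval_inv_eq_zero (ne_zero hz₀) hP₀).subset ?_
  rintro z ⟨hz, hPz⟩
  exact ⟨ne_zero hz, by rwa [Complex.inv_eq_conj hz]⟩
end

section
/- Let P and Q be polynomials in two variables over ℂ such that Q(z, conj z) ≠ 0 for every z with |z| = 1. Then there exist one-variable polynomials p₁, q₁, p₂, q₂ over ℂ with q₁(z) ≠ 0 and q₂(z) ≠ 0 for every z with |z| ≤ 1 (so all poles of the rational functions p₁/q₁ and p₂/q₂ lie strictly outside the closed unit disc), such that P(z, conj z)/Q(z, conj z) = p₁(z)/q₁(z) + conj(p₂(z)/q₂(z)) for all z with |z| = 1. (This is the 'poles outside' decomposition of the restriction of a rational function of z and z̄ to the unit circle.) -/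
/-!
On the unit circle `conj z = z⁻¹`, so there `P(z, z̄) / Q(z, z̄) = A(z) / B(z)` for one-variable
polynomials `A`, `B` with `B` zero-free on the circle. Split `B = g * h`, with the roots of `g`
inside and those of `h` outside the closed disc. Since `g` and `h` are coprime,
`A / (g * h) = q / h + r / g` with `deg r < deg g`. Finally, on the circle
`r(z) / g(z) = conj (r*(z) / g*(z))`, where `f*(z) = z ^ d * conj (f (1 / z̄))` is the conjugate
reflection in degree `d = deg g`; the roots of `g*` are the points `1 / ā` for the roots `a` of `g`,
so they lie outside the closed disc.
-/

open ComplexConjugate Polynomial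

theorem MvPolynomial.exists_eval_mul_pow_eq_eval {R : Type*} [CommRing R]
    (P : MvPolynomial (Fin 2) R) :
    ∃ (A : R[X]) (n : ℕ), ∀ z w : R, z * w = 1 → eval ![z, w] P * z ^ n = A.eval z := by
  induction P using MvPolynomial.induction_on with
  | C a => exact ⟨Polynomial.C a, 0, fun z w _ => by simp⟩
  | add p q hp hq =>
    obtain ⟨A, n, hA⟩ := hp
    obtain ⟨B, m, hB⟩ := hq
    refine ⟨A * Polynomial.X ^ m + B * Polynomial.X ^ n, n + m, fun z w hzw => ?_⟩
    simp only [eval_add, Polynomial.eval_add, Polynomial.eval_mul, Polynomial.eval_pow,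
      Polynomial.eval_X, ← hA z w hzw, ← hB z w hzw]
    ring
  | mul_X p i hp =>
    obtain ⟨A, n, hA⟩ := hp
    fin_cases i
    · refine ⟨A * Polynomial.X, n, fun z w hzw => ?_⟩
      simp only [Fin.zero_eta, map_mul, eval_X, Matrix.cons_val_zero, Polynomial.eval_mul,
        Polynomial.eval_X, ← hA z w hzw]
      ring
    · refine ⟨A, n + 1, fun z w hzw => ?_⟩
      simp only [Fin.mk_one, map_mul, eval_X, Matrix.cons_val_one, Matrix.cons_val_fin_one,
        ← hA z w hzw]
      linear_combination (eval ![z, w] p * z ^ n) * hzw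

theorem Polynomial.exists_monic_mul_eq_of_isRoot {K : Type*} [Field K] [IsAlgClosed K]
    {B : K[X]} (hB : B ≠ 0) (p : K → Prop) [DecidablePred p] :
    ∃ g h : K[X], g * h = B ∧ g.Monic ∧ (∀ a, g.IsRoot a → p a) ∧ ∀ a, h.IsRoot a → ¬p a := by
  have hlc : B.leadingCoeff ≠ 0 := leadingCoeff_ne_zero.mpr hB
  have hprod_ne (t : Multiset K) : (t.map fun a => X - C a).prod ≠ 0 :=
    (monic_multiset_prod_of_monic _ _ fun a _ => monic_X_sub_C a).ne_zero
  refine ⟨((B.roots.filter p).map fun a => X - C a).prod,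
    C B.leadingCoeff * ((B.roots.filter (¬p ·)).map fun a => X - C a).prod, ?_,
    monic_multiset_prod_of_monic _ _ fun a _ => monic_X_sub_C a, fun a ha => ?_, fun a ha => ?_⟩
  · conv_rhs => rw [(IsAlgClosed.splits B).eq_prod_roots, ← Multiset.filter_add_not p B.roots]
    rw [Multiset.map_add, Multiset.prod_add]
    ring
  · rw [← mem_roots (hprod_ne _), roots_multiset_prod_X_sub_C] at ha
    exact (Multiset.mem_filter.mp ha).2
  · rw [← mem_roots (mul_ne_zero (C_ne_zero.mpr hlc) (hprod_ne _)), roots_C_mul _ hlc,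
      roots_multiset_prod_X_sub_C] at ha
    exact (Multiset.mem_filter.mp ha).2

theorem Polynomial.exists_eq_mul_add_mul_degree_lt {R : Type*} [CommRing R] [Nontrivial R]
    {f g : R[X]} (hfg : IsCoprime f g) (hf : f.Monic) (A : R[X]) :
    ∃ q r : R[X], A = q * f + r * g ∧ r.degree < f.degree := by
  obtain ⟨u, v, huv⟩ := hfg
  refine ⟨A * u + (A * v /ₘ f) * g, A * v %ₘ f, ?_, degree_modByMonic_lt _ hf⟩
  linear_combination (-A) * huv - g * modByMonic_add_div (A * v) f

theorem eval_map_conj_reflect_of_norm_eq_one {f : ℂ[X]} {N : ℕ} (hf : f.natDegree ≤ N)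
    {z : ℂ} (hz : ‖z‖ = 1) :
    ((f.reflect N).map (starRingEnd ℂ)).eval z = z ^ N * conj (f.eval z) := by
  have hz0 : z ≠ 0 := norm_ne_zero_iff.mp (by simp [hz])
  have : Invertible (conj z) := invertibleOfNonzero (by simpa using hz0)
  have hinv : ⅟(conj z) = z := by rw [invOf_eq_inv, ← Complex.inv_eq_conj hz, inv_inv]
  have key := eval₂_reflect_mul_pow (starRingEnd ℂ) (conj z) N f hf
  rw [hinv, eval₂_at_apply] at key
  rw [eval_map, ← key, mul_left_comm, ← mul_pow, Complex.mul_conj', hz]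
  simp

theorem eval_map_conj_reflect_ne_zero {f : ℂ[X]} (hf : ∀ a, f.IsRoot a → ‖a‖ < 1)
    {z : ℂ} (hz : ‖z‖ ≤ 1) :
    ((f.reflect f.natDegree).map (starRingEnd ℂ)).eval z ≠ 0 := by
  have hf0 : f ≠ 0 := by rintro rfl; simpa using hf 1
  rw [eval_map]
  rcases eq_or_ne z 0 with rfl | hz0
  · simpa [← coeff_zero_eq_eval_zero, coeff_reflect] using hf0
  · have : Invertible z⁻¹ := invertibleOfNonzero (inv_ne_zero hz0)
    have key := eval₂_reflect_eq_zero_iff (starRingEnd ℂ) z⁻¹ f.natDegree f le_rfl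
    rw [invOf_eq_inv, inv_inv] at key
    rw [ne_eq, key, ← Complex.conj_conj z⁻¹, eval₂_at_apply, map_eq_zero]
    intro h
    have := hf _ h
    rw [Complex.norm_conj, norm_inv] at this
    exact this.not_ge ((one_le_inv₀ (norm_pos_iff.mpr hz0)).mpr hz)

theorem exists_eval_div_eq_add_conj_of_norm_eq_one {A B : ℂ[X]}
    (hB : ∀ z : ℂ, ‖z‖ = 1 → B.eval z ≠ 0) :
    ∃ p₁ q₁ p₂ q₂ : ℂ[X],
      (∀ z : ℂ, ‖z‖ ≤ 1 → q₁.eval z ≠ 0) ∧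
      (∀ z : ℂ, ‖z‖ ≤ 1 → q₂.eval z ≠ 0) ∧
      ∀ z : ℂ, ‖z‖ = 1 →
        A.eval z / B.eval z = p₁.eval z / q₁.eval z + conj (p₂.eval z / q₂.eval z) := by
  have hB0 : B ≠ 0 := by rintro rfl; simpa using hB 1
  obtain ⟨g, h, rfl, hg, hg_roots, hh_roots⟩ := exists_monic_mul_eq_of_isRoot hB0 (‖·‖ < 1)
  have hh : ∀ z : ℂ, ‖z‖ ≤ 1 → h.eval z ≠ 0 := fun z hz hz0 =>
    hB z (le_antisymm hz (not_lt.mp (hh_roots z hz0))) (by simp [hz0])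
  have hcop : IsCoprime g h := (isCoprime_iff_aeval_ne_zero_of_isAlgClosed ℂ ℂ g h).mpr
    fun a => or_iff_not_imp_left.mpr fun hga => hh a (hg_roots a (by simpa using hga)).le
  obtain ⟨q, r, rfl, hr_deg⟩ := exists_eq_mul_add_mul_degree_lt hcop hg A
  have hr : r.natDegree ≤ g.natDegree := natDegree_le_natDegree hr_deg.le
  refine ⟨q, h, (r.reflect g.natDegree).map (starRingEnd ℂ),
    (g.reflect g.natDegree).map (starRingEnd ℂ), hh,
    fun _ => eval_map_conj_reflect_ne_zero hg_roots, fun z hz => ?_⟩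
  have hz0 : z ≠ 0 := norm_ne_zero_iff.mp (by simp [hz])
  have hgz : g.eval z ≠ 0 := left_ne_zero_of_mul (by simpa using hB z hz)
  rw [eval_map_conj_reflect_of_norm_eq_one hr hz, eval_map_conj_reflect_of_norm_eq_one le_rfl hz]
  simp only [eval_add, eval_mul, map_div₀, map_mul, map_pow, Complex.conj_conj]
  field_simp [hh z hz.le, _root_.map_ne_zero _ |>.mpr hz0]

/-- The "poles outside" decomposition: the restriction to the unit circle of a rational
function of `z` and `z̄` with nonvanishing denominator on the circle can be written as
`r₁(z) + conj (r₂(z))`, where `r₁` and `r₂` are rational functions of one variable whose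
denominators do not vanish on the closed unit disc. -/
theorem poles_outside_decomposition_on_circle
    (P Q : MvPolynomial (Fin 2) ℂ)
    (hQ : ∀ z : ℂ, ‖z‖ = 1 → MvPolynomial.eval ![z, conj z] Q ≠ 0) :
    ∃ p₁ q₁ p₂ q₂ : Polynomial ℂ,
      (∀ z : ℂ, ‖z‖ ≤ 1 → q₁.eval z ≠ 0) ∧
      (∀ z : ℂ, ‖z‖ ≤ 1 → q₂.eval z ≠ 0) ∧
      ∀ z : ℂ, ‖z‖ = 1 →
        MvPolynomial.eval ![z, conj z] P / MvPolynomial.eval ![z, conj z] Q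
          = p₁.eval z / q₁.eval z + conj (p₂.eval z / q₂.eval z) := by
  obtain ⟨A, n, hA⟩ := MvPolynomial.exists_eval_mul_pow_eq_eval P
  obtain ⟨B, m, hB⟩ := MvPolynomial.exists_eval_mul_pow_eq_eval Q
  have hpow (z : ℂ) (hz : ‖z‖ = 1) : z ^ n * z ^ m ≠ 0 := by
    have hz0 : z ≠ 0 := norm_ne_zero_iff.mp (by simp [hz])
    positivity
  have hconj (z : ℂ) (hz : ‖z‖ = 1) : z * conj z = 1 := by
    rw [Complex.mul_conj', hz]; simp
  have hA' (z : ℂ) (hz : ‖z‖ = 1) :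
      (A * X ^ m).eval z = MvPolynomial.eval ![z, conj z] P * (z ^ n * z ^ m) := by
    rw [eval_mul, eval_pow, eval_X, ← hA z _ (hconj z hz), mul_assoc]
  have hB' (z : ℂ) (hz : ‖z‖ = 1) :
      (B * X ^ n).eval z = MvPolynomial.eval ![z, conj z] Q * (z ^ n * z ^ m) := by
    rw [eval_mul, eval_pow, eval_X, ← hB z _ (hconj z hz), mul_assoc, mul_comm (z ^ m)]
  obtain ⟨p₁, q₁, p₂, q₂, hq₁, hq₂, hdecomp⟩ := exists_eval_div_eq_add_conj_of_norm_eq_one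
    fun z hz => (hB' z hz).symm ▸ mul_ne_zero (hQ z hz) (hpow z hz)
  refine ⟨p₁, q₁, p₂, q₂, hq₁, hq₂, fun z hz => ?_⟩
  rw [← hdecomp z hz, hA' z hz, hB' z hz, mul_div_mul_right _ _ (hpow z hz)]
end

section
/- Let p₁, q₁, p₂, q₂ be one-variable polynomials over ℂ with q₁(z) ≠ 0 and q₂(z) ≠ 0 for every z with |z| ≤ 1, and suppose p₁(z)/q₁(z) + conj(p₂(z)/q₂(z)) = 0 for every z with |z| = 1. Then there exists a constant c ∈ ℂ such that p₁(z)/q₁(z) = c and p₂(z)/q₂(z) = -conj(c) for every z with |z| ≤ 1. Consequently, the 'poles outside' decomposition of a rational function of z and z̄ on the unit circle is unique up to an additive constant. -/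
/-!
On the unit circle `conj (p z) = z⁻ᵐ p*(z)`, where `p* = X ^ m * conj p (1 / X)` is the
reflection of `p` through the circle, so clearing denominators turns the hypothesis into the
polynomial identity `p₁ q₂* + p₂* q₁ = 0`. The roots of `q₁` lie outside the closed disc and those
of `q₂*` inside the open disc, hence `q₁ ∣ p₁`, say `p₁ = s q₁`, and `s q₂* = -p₂*`. As `q₂ 0 ≠ 0`,
`q₂*` has degree exactly `m ≥ deg p₂*`, so `s` is constant. The hypothesis is symmetric under
conjugation, so `p₂ / q₂` is constant as well, and evaluating at `z = 1` relates the two constants.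
-/

open ComplexConjugate Polynomial

namespace Polynomial

noncomputable def conjReflect (N : ℕ) (p : ℂ[X]) : ℂ[X] :=
  reflect N (p.map (starRingEnd ℂ))

variable {N : ℕ} {p : ℂ[X]}

theorem eval_conjReflect (hp : p.natDegree ≤ N) {z : ℂ} (hz : z ≠ 0) :
    (conjReflect N p).eval z = z ^ N * conj (p.eval (conj z)⁻¹) := by
  have : Invertible z⁻¹ := invertibleOfNonzero (inv_ne_zero hz)
  have h := eval₂_reflect_mul_pow (RingHom.id ℂ) z⁻¹ N (p.map (starRingEnd ℂ))
    (natDegree_map_le.trans hp)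
  rw [invOf_eq_inv, inv_inv, ← eval, ← eval, eval_map] at h
  have hconj : eval₂ (starRingEnd ℂ) z⁻¹ p = conj (p.eval (conj z)⁻¹) := by
    rw [← eval₂_hom, map_inv₀, Complex.conj_conj]
  rw [conjReflect, ← hconj, ← h, mul_left_comm, ← mul_pow, mul_inv_cancel₀ hz, one_pow, mul_one]

theorem eval_conjReflect_of_norm_eq_one (hp : p.natDegree ≤ N) {z : ℂ} (hz : ‖z‖ = 1) :
    (conjReflect N p).eval z = z ^ N * conj (p.eval z) := by
  rw [eval_conjReflect hp (norm_ne_zero_iff.mp (hz ▸ one_ne_zero)), ← RCLike.inv_eq_conj hz, inv_inv]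

theorem coeff_conjReflect_self :
    (conjReflect N p).coeff N = conj (p.eval 0) := by
  rw [conjReflect, coeff_reflect, revAt_le le_rfl, Nat.sub_self, coeff_map, coeff_zero_eq_eval_zero]

theorem natDegree_conjReflect_le (hp : p.natDegree ≤ N) : (conjReflect N p).natDegree ≤ N :=
  natDegree_reflect_le.trans (max_le le_rfl (natDegree_map_le.trans hp))

theorem eq_zero_of_forall_norm_eq_one (h : ∀ z : ℂ, ‖z‖ = 1 → p.eval z = 0) : p = 0 := by
  have hsphere : (Metric.sphere (0 : ℂ) 1).Infinite :=
    (isConnected_sphere (by simp) 0 zero_le_one).isPreconnected.infinite_of_nontrivial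
      ⟨1, by simp, -1, by simp, by norm_num⟩
  exact eq_zero_of_infinite_isRoot p (hsphere.mono fun z hz => h z (by simpa using hz))


theorem isCoprime_conjReflect {q₁ q₂ : ℂ[X]} (hq₂ : q₂.natDegree ≤ N)
    (h₁ : ∀ z : ℂ, ‖z‖ ≤ 1 → q₁.eval z ≠ 0) (h₂ : ∀ z : ℂ, ‖z‖ < 1 → q₂.eval z ≠ 0) :
    IsCoprime q₁ (conjReflect N q₂) := by
  refine (isCoprime_iff_aeval_ne_zero_of_isAlgClosed ℂ ℂ _ _).2 fun z => ?_
  simp only [coe_aeval_eq_eval]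
  rcases le_or_gt ‖z‖ 1 with hz | hz
  · exact Or.inl (h₁ z hz)
  · have hz0 : z ≠ 0 := norm_pos_iff.mp (one_pos.trans hz)
    have hinv : ‖(conj z)⁻¹‖ < 1 := by
      rw [norm_inv, Complex.norm_conj]
      exact inv_lt_one_of_one_lt₀ hz
    rw [eval_conjReflect hq₂ hz0]
    exact Or.inr (mul_ne_zero (pow_ne_zero _ hz0) ((_root_.map_ne_zero _).2 (h₂ _ hinv)))

theorem exists_eq_C_mul_of_add_conj_eq_zero {p₁ q₁ p₂ q₂ : ℂ[X]}
    (h₁ : ∀ z : ℂ, ‖z‖ ≤ 1 → q₁.eval z ≠ 0) (h₂ : ∀ z : ℂ, ‖z‖ ≤ 1 → q₂.eval z ≠ 0)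
    (hsum : ∀ z : ℂ, ‖z‖ = 1 →
      p₁.eval z / q₁.eval z + conj (p₂.eval z / q₂.eval z) = 0) :
    ∃ c, p₁ = C c * q₁ := by
  set m := max p₂.natDegree q₂.natDegree
  have hp₂ : p₂.natDegree ≤ m := le_max_left _ _
  have hq₂ : q₂.natDegree ≤ m := le_max_right _ _
  have hpoly : p₁ * conjReflect m q₂ + conjReflect m p₂ * q₁ = 0 := by
    refine eq_zero_of_forall_norm_eq_one fun z hz => ?_
    have hq₁z := h₁ z hz.le
    have hq₂z : conj (q₂.eval z) ≠ 0 := (_root_.map_ne_zero _).2 (h₂ z hz.le)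
    have h := hsum z hz
    rw [map_div₀, div_add_div _ _ hq₁z hq₂z, div_eq_zero_iff,
      or_iff_left (mul_ne_zero hq₁z hq₂z)] at h
    simp only [eval_add, eval_mul, eval_conjReflect_of_norm_eq_one hp₂ hz,
      eval_conjReflect_of_norm_eq_one hq₂ hz]
    linear_combination z ^ m * h
  have hq₁ : q₁ ≠ 0 := fun h => h₁ 0 (by simp) (by simp [h])
  obtain ⟨s, rfl⟩ : q₁ ∣ p₁ :=
    (isCoprime_conjReflect hq₂ h₁ fun z hz => h₂ z hz.le).dvd_of_dvd_mul_right
      ⟨-conjReflect m p₂, by linear_combination hpoly⟩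
  have hs : s * conjReflect m q₂ = -conjReflect m p₂ :=
    mul_left_cancel₀ hq₁ (by linear_combination hpoly)
  have hdeg : s.natDegree = 0 := by
    have hlead : (conjReflect m q₂).coeff m ≠ 0 := by
      rw [coeff_conjReflect_self]
      exact (_root_.map_ne_zero _).2 (h₂ 0 (by simp))
    rcases eq_or_ne s 0 with rfl | hs0
    · simp
    have hR : (conjReflect m q₂).natDegree = m :=
      natDegree_eq_of_le_of_coeff_ne_zero (natDegree_conjReflect_le hq₂) hlead
    have hR0 : conjReflect m q₂ ≠ 0 := fun h => hlead (by rw [h, coeff_zero])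
    have hmul := natDegree_mul hs0 hR0
    rw [hs, natDegree_neg, hR] at hmul
    have hup := natDegree_conjReflect_le hp₂
    omega
  exact ⟨s.coeff 0, by rw [mul_comm, ← eq_C_of_natDegree_eq_zero hdeg]⟩

end Polynomial

/-- Uniqueness (up to an additive constant) of the "poles outside" decomposition:
if `p₁/q₁ + conj (p₂/q₂)` vanishes on the unit circle, where `q₁` and `q₂` do not
vanish on the closed unit disc, then `p₁/q₁` is a constant `c` and `p₂/q₂` is the
constant `-conj c` on the closed unit disc. -/
theorem poles_outside_decomposition_unique
    (p₁ q₁ p₂ q₂ : Polynomial ℂ)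
    (h₁ : ∀ z : ℂ, ‖z‖ ≤ 1 → q₁.eval z ≠ 0)
    (h₂ : ∀ z : ℂ, ‖z‖ ≤ 1 → q₂.eval z ≠ 0)
    (hsum : ∀ z : ℂ, ‖z‖ = 1 →
      p₁.eval z / q₁.eval z + conj (p₂.eval z / q₂.eval z) = 0) :
    ∃ c : ℂ, ∀ z : ℂ, ‖z‖ ≤ 1 →
      p₁.eval z / q₁.eval z = c ∧ p₂.eval z / q₂.eval z = -conj c := by
  have hsum' : ∀ z : ℂ, ‖z‖ = 1 → p₂.eval z / q₂.eval z + conj (p₁.eval z / q₁.eval z) = 0 :=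
    fun z hz => by simpa [add_comm] using congrArg conj (hsum z hz)
  obtain ⟨c, rfl⟩ := exists_eq_C_mul_of_add_conj_eq_zero h₁ h₂ hsum
  obtain ⟨d, rfl⟩ := exists_eq_C_mul_of_add_conj_eq_zero h₂ h₁ hsum'
  have hratio {a : ℂ} {q : ℂ[X]} {z : ℂ} (hq : q.eval z ≠ 0) :
      (C a * q).eval z / q.eval z = a := by
    rw [eval_mul, eval_C, mul_div_cancel_right₀ _ hq]
  have hd : d = -conj c := by
    have h := congrArg conj (hsum 1 norm_one)
    rw [hratio (h₁ 1 norm_one.le), hratio (h₂ 1 norm_one.le), map_add, Complex.conj_conj,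
      map_zero] at h
    linear_combination h
  exact ⟨c, fun z hz => ⟨hratio (h₁ z hz), hd ▸ hratio (h₂ z hz)⟩⟩
end

section
/- Let f and g be functions holomorphic on an open subset of ℂ containing the closed unit disc {z : |z| ≤ 1}, and suppose f(z) = conj(g(z)) for every z with |z| = 1. Then there exists a constant c ∈ ℂ such that f(z) = c and g(z) = conj(c) for every z with |z| ≤ 1. (Schwarz reflection across the unit circle produces a bounded entire function, which is constant by Liouville's theorem.) -/
/-!
Both `f + g` and `I * (f - g)` are holomorphic near the closed disc and real on the circle.
A holomorphic function that is real on the boundary is real inside (maximum modulus for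
`exp (∓I * h)`), hence constant by the open mapping theorem; so `f` and `g` are constant, and
the boundary relation identifies the constants.
-/

open ComplexConjugate Metric Set Bornology

theorem Complex.im_le_of_forall_mem_frontier_im_le {E : Type*} [NormedAddCommGroup E]
    [NormedSpace ℂ E] [Nontrivial E] {h : E → ℂ} {U : Set E} (hU : IsBounded U)
    (hd : DiffContOnCl ℂ h U) {C : ℝ} (hC : ∀ z ∈ frontier U, (h z).im ≤ C) {z : E}
    (hz : z ∈ closure U) : (h z).im ≤ C := by
  have norm_exp_eq : ∀ w, ‖exp (-I * h w)‖ = Real.exp (h w).im := fun w => by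
    simp [norm_exp, mul_re]
  have hexp : DiffContOnCl ℂ (fun w => exp (-I * h w)) U :=
    differentiable_exp.comp_diffContOnCl (hd.const_smul (-I))
  have := norm_le_of_forall_mem_frontier_norm_le hU hexp
    (fun w hw => (norm_exp_eq w).trans_le (Real.exp_le_exp.2 (hC w hw))) hz
  rwa [norm_exp_eq, Real.exp_le_exp] at this

theorem Complex.im_eq_of_forall_mem_frontier_im_eq {E : Type*} [NormedAddCommGroup E]
    [NormedSpace ℂ E] [Nontrivial E] {h : E → ℂ} {U : Set E} (hU : IsBounded U)
    (hd : DiffContOnCl ℂ h U) {c : ℝ} (hc : ∀ z ∈ frontier U, (h z).im = c) {z : E}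
    (hz : z ∈ closure U) : (h z).im = c := by
  have upper := im_le_of_forall_mem_frontier_im_le hU hd (fun w hw => (hc w hw).le) hz
  have lower := im_le_of_forall_mem_frontier_im_le (C := -c) hU hd.neg
    (fun w hw => by simp [hc w hw]) hz
  simp only [Pi.neg_apply, neg_im] at lower
  linarith

theorem DiffContOnCl.exists_eq_const_of_im_eq_on_frontier {h : ℂ → ℂ} {U : Set ℂ}
    (hUo : IsOpen U) (hUc : IsConnected U) (hUb : IsBounded U) (hd : DiffContOnCl ℂ h U)
    {c : ℝ} (hc : ∀ z ∈ frontier U, (h z).im = c) :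
    ∃ w, ∀ z ∈ closure U, h z = w := by
  obtain ⟨w, hw⟩ := (hd.differentiableOn.analyticOnNhd hUo).eq_const_of_im_eq_const
    (fun z hz => Complex.im_eq_of_forall_mem_frontier_im_eq hUb hd hc (subset_closure hz))
    hUo hUc
  exact ⟨w, fun z hz => EqOn.of_subset_closure hw hd.continuousOn continuousOn_const
    subset_closure subset_rfl hz⟩

theorem DifferentiableOn.eq_of_mem_closedBall_of_im_eq_on_sphere {h : ℂ → ℂ} {U : Set ℂ}
    (hd : DifferentiableOn ℂ h U) {c : ℂ} {r : ℝ} (hr : 0 < r) (hU : closedBall c r ⊆ U)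
    {a : ℝ} (ha : ∀ z ∈ sphere c r, (h z).im = a) {z w : ℂ} (hz : z ∈ closedBall c r)
    (hw : w ∈ closedBall c r) : h z = h w := by
  obtain ⟨v, hv⟩ := (hd.diffContOnCl_ball hU).exists_eq_const_of_im_eq_on_frontier
    isOpen_ball (isConnected_ball hr) isBounded_ball
    (fun z hz => ha z (by rwa [frontier_ball c hr.ne'] at hz))
  rw [closure_ball c hr.ne'] at hv
  rw [hv z hz, hv w hw]

theorem holomorphic_eq_conj_on_circle_constant_general
    (U : Set ℂ) (hsub : {z : ℂ | ‖z‖ ≤ 1} ⊆ U)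
    (f g : ℂ → ℂ) (hf : DifferentiableOn ℂ f U) (hg : DifferentiableOn ℂ g U)
    (hbd : ∀ z : ℂ, ‖z‖ = 1 → f z = conj (g z)) :
    ∃ c : ℂ, ∀ z : ℂ, ‖z‖ ≤ 1 → f z = c ∧ g z = conj c := by
  have hdisc : closedBall (0 : ℂ) 1 ⊆ U := fun z hz => hsub (mem_closedBall_zero_iff.1 hz)
  have hbd' : ∀ z ∈ sphere (0 : ℂ) 1, f z = conj (g z) := fun z hz =>
    hbd z (mem_sphere_zero_iff_norm.1 hz)
  have hone : (1 : ℂ) ∈ closedBall (0 : ℂ) 1 := by simp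
  refine ⟨f 1, fun z hz => ?_⟩
  replace hz : z ∈ closedBall (0 : ℂ) 1 := mem_closedBall_zero_iff.2 hz
  have hsum : f z + g z = f 1 + g 1 :=
    (hf.add hg).eq_of_mem_closedBall_of_im_eq_on_sphere one_pos hdisc (a := 0)
      (fun w hw => by simp [hbd' w hw]) hz hone
  have hdiff : f z - g z = f 1 - g 1 := mul_left_cancel₀ Complex.I_ne_zero <|
    ((hf.sub hg).const_mul Complex.I).eq_of_mem_closedBall_of_im_eq_on_sphere one_pos hdisc (a := 0)
      (fun w hw => by simp [hbd' w hw]) hz hone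
  have hconj : g 1 = conj (f 1) := by rw [hbd 1 (by simp), Complex.conj_conj]
  constructor
  · linear_combination (hsum + hdiff) / 2
  · linear_combination (hsum - hdiff) / 2 + hconj

/-- If `f` and `g` are holomorphic on an open set containing the closed unit disc and
`f = conj g` on the unit circle, then `f` and `g` are constant on the closed unit disc:
Schwarz reflection produces a bounded entire function, which is constant by Liouville. -/
theorem holomorphic_eq_conj_on_circle_constant
    (U : Set ℂ) (hU : IsOpen U) (hsub : {z : ℂ | ‖z‖ ≤ 1} ⊆ U)
    (f g : ℂ → ℂ) (hf : DifferentiableOn ℂ f U) (hg : DifferentiableOn ℂ g U)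
    (hbd : ∀ z : ℂ, ‖z‖ = 1 → f z = conj (g z)) :
    ∃ c : ℂ, ∀ z : ℂ, ‖z‖ ≤ 1 → f z = c ∧ g z = conj c :=
  holomorphic_eq_conj_on_circle_constant_general U hsub f g hf hg hbd
end

section
/- Let U ⊆ ℂ be a connected open set containing a nonempty open interval I of the real axis, and let z : U → ℂ be an injective holomorphic function. Then there exists an open set V containing z(I) and a holomorphic function S : V → ℂ (the Schwarz function of the arc z(I)) such that S(z(t)) = conj(z(t)) for every t ∈ I. Moreover S is unique in the sense that if V is a connected open set containing z(I) and S₁, S₂ : V → ℂ are holomorphic with S₁(z(t)) = conj(z(t)) = S₂(z(t)) for all t ∈ I, then S₁ = S₂ on V. -/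
open ComplexConjugate

/-!
An injective holomorphic map `z` is open and its derivative has only isolated zeros, so its
inverse `z⁻¹` is continuous on `z(U)` and holomorphic off a discrete set, hence holomorphic by
Riemann's removable singularity theorem. The Schwarz function is then
`S = conj ∘ z ∘ conj ∘ z⁻¹`, holomorphic where `conj ∘ z⁻¹` lands back in `U`; on the real axis
`conj t = t`, which gives `S (z t) = conj (z t)`. Uniqueness is the identity theorem, the arc
`z((a, b))` accumulating at each of its points.
-/

open Set Filter Topology

lemma Set.InjOn.not_eventually_eq {X Y : Type*} [TopologicalSpace X] {f : X → Y} {s : Set X}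
    {x : X} [(𝓝[≠] x).NeBot] (hf : InjOn f s) (hs : s ∈ 𝓝 x) :
    ¬ ∀ᶠ y in 𝓝 x, f y = f x := by
  intro h
  have hx : ∀ᶠ y in 𝓝 x, y = x := by
    filter_upwards [h, hs] with y hy hys using hf hys (mem_of_mem_nhds hs) hy
  have hne : ∀ᶠ y in 𝓝[≠] x, y ≠ x := self_mem_nhdsWithin
  obtain ⟨y, hyx, hyx'⟩ := ((hx.filter_mono nhdsWithin_le_nhds).and hne).exists
  exact hyx' hyx

lemma eventually_eq_of_eventually_deriv_eq_zero {𝕜 G : Type*} [RCLike 𝕜] [NormedAddCommGroup G]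
    [NormedSpace 𝕜 G] {f : 𝕜 → G} {x : 𝕜}
    (h : ∀ᶠ y in 𝓝 x, DifferentiableAt 𝕜 f y ∧ deriv f y = 0) : ∀ᶠ y in 𝓝 x, f y = f x := by
  obtain ⟨ε, hε, hball⟩ := Metric.eventually_nhds_iff_ball.1 h
  filter_upwards [Metric.ball_mem_nhds x hε] with y hy
  exact Metric.isOpen_ball.is_const_of_deriv_eq_zero (convex_ball x ε).isPreconnected
    (fun v hv => (hball v hv).1.differentiableWithinAt) (fun v hv => (hball v hv).2) hy
    (Metric.mem_ball_self hε)

lemma AnalyticAt.eventually_deriv_ne_zero_of_injOn {𝕜 E : Type*} [RCLike 𝕜]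
    [NormedAddCommGroup E] [NormedSpace 𝕜 E] [CompleteSpace E] {f : 𝕜 → E} {s : Set 𝕜} {x : 𝕜}
    (hf : AnalyticAt 𝕜 f x) (hinj : InjOn f s) (hs : s ∈ 𝓝 x) :
    ∀ᶠ y in 𝓝[≠] x, deriv f y ≠ 0 := by
  refine hf.deriv.eventually_eq_zero_or_eventually_ne_zero.resolve_left fun h => ?_
  refine hinj.not_eventually_eq hs (eventually_eq_of_eventually_deriv_eq_zero ?_)
  filter_upwards [hf.eventually_analyticAt, h] with y hy hy' using ⟨hy.differentiableAt, hy'⟩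

lemma AnalyticAt.nhds_le_map_nhds_of_injOn {f : ℂ → ℂ} {s : Set ℂ} {x : ℂ}
    (hf : AnalyticAt ℂ f x) (hinj : InjOn f s) (hs : s ∈ 𝓝 x) : 𝓝 (f x) ≤ map f (𝓝 x) :=
  hf.eventually_constant_or_nhds_le_map_nhds.resolve_left (hinj.not_eventually_eq hs)

namespace AnalyticOnNhd

variable {f : ℂ → ℂ} {U : Set ℂ}

lemma isOpen_image_of_injOn (hf : AnalyticOnNhd ℂ f U) (hU : IsOpen U) (hinj : InjOn f U) :
    IsOpen (f '' U) := by
  refine isOpen_iff_mem_nhds.2 ?_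
  rintro _ ⟨x, hx, rfl⟩
  exact (hf x hx).nhds_le_map_nhds_of_injOn hinj (hU.mem_nhds hx) (image_mem_map (hU.mem_nhds hx))

lemma continuousOn_invFunOn (hf : AnalyticOnNhd ℂ f U) (hU : IsOpen U) (hinj : InjOn f U) :
    ContinuousOn (Function.invFunOn f U) (f '' U) := by
  rintro _ ⟨x, hx, rfl⟩
  refine ContinuousAt.continuousWithinAt fun t ht => ?_
  rw [hinj.leftInvOn_invFunOn hx] at ht
  have hU' : U ∈ 𝓝 x := hU.mem_nhds hx
  have himage : f '' (t ∩ U) ∈ 𝓝 (f x) :=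
    (hf x hx).nhds_le_map_nhds_of_injOn hinj hU' (image_mem_map (inter_mem ht hU'))
  refine mem_map.2 (mem_of_superset himage ?_)
  rintro _ ⟨y, ⟨hyt, hyU⟩, rfl⟩
  rwa [mem_preimage, hinj.leftInvOn_invFunOn hyU]

lemma differentiableAt_invFunOn_of_deriv_ne_zero (hf : AnalyticOnNhd ℂ f U) (hU : IsOpen U)
    (hinj : InjOn f U) {x : ℂ} (hx : x ∈ U) (hfx : deriv f x ≠ 0) :
    DifferentiableAt ℂ (Function.invFunOn f U) (f x) :=
  ((hf x hx).hasStrictDerivAt.to_local_left_inverse hfx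
    (eventually_of_mem (hU.mem_nhds hx) fun _ hy => hinj.leftInvOn_invFunOn hy)).hasDerivAt
    |>.differentiableAt

lemma differentiableOn_invFunOn (hf : AnalyticOnNhd ℂ f U) (hU : IsOpen U) (hinj : InjOn f U) :
    DifferentiableOn ℂ (Function.invFunOn f U) (f '' U) := by
  rintro _ ⟨x, hx, rfl⟩
  set O : Set ℂ := {y | y ∈ U ∧ (y ≠ x → deriv f y ≠ 0)}
  have hO : O ∈ 𝓝 x := inter_mem (hU.mem_nhds hx)
    (eventually_nhdsWithin_iff.1 ((hf x hx).eventually_deriv_ne_zero_of_injOn hinj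
      (hU.mem_nhds hx)))
  have hfO : f '' O ∈ 𝓝 (f x) := (hf x hx).nhds_le_map_nhds_of_injOn hinj (hU.mem_nhds hx)
    (image_mem_map hO)
  have hpunct : DifferentiableOn ℂ (Function.invFunOn f U) (f '' O \ {f x}) := by
    rintro _ ⟨⟨y, ⟨hyU, hy⟩, rfl⟩, hyx⟩
    exact (hf.differentiableAt_invFunOn_of_deriv_ne_zero hU hinj hyU
      (hy fun h => hyx (h ▸ rfl))).differentiableWithinAt
  have hcont : ContinuousAt (Function.invFunOn f U) (f x) :=
    (hf.continuousOn_invFunOn hU hinj).continuousAt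
      ((hf.isOpen_image_of_injOn hU hinj).mem_nhds (mem_image_of_mem f hx))
  exact (((Complex.differentiableOn_compl_singleton_and_continuousAt_iff hfO).1
    ⟨hpunct, hcont⟩).differentiableAt hfO).differentiableWithinAt

end AnalyticOnNhd

noncomputable def schwarzFunction (U : Set ℂ) (z : ℂ → ℂ) : ℂ → ℂ :=
  conj ∘ z ∘ conj ∘ Function.invFunOn z U

section SchwarzFunction

variable {U : Set ℂ} {z : ℂ → ℂ}

lemma schwarzFunction_apply (hinj : InjOn z U) {x : ℂ} (hx : x ∈ U) :
    schwarzFunction U z (z x) = conj (z (conj x)) := by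
  simp only [schwarzFunction, Function.comp_apply, hinj.leftInvOn_invFunOn hx]

lemma differentiableOn_schwarzFunction (hz : AnalyticOnNhd ℂ z U) (hU : IsOpen U)
    (hinj : InjOn z U) : DifferentiableOn ℂ (schwarzFunction U z) (z '' (U ∩ conj ⁻¹' U)) := by
  rintro _ ⟨x, ⟨hxU, hxU'⟩, rfl⟩
  have hinv : DifferentiableAt ℂ (Function.invFunOn z U) (z x) :=
    (hz.differentiableOn_invFunOn hU hinj).differentiableAt
      ((hz.isOpen_image_of_injOn hU hinj).mem_nhds (mem_image_of_mem z hxU))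
  have hrefl : DifferentiableAt ℂ (conj ∘ z ∘ conj) (Function.invFunOn z U (z x)) := by
    rw [hinj.leftInvOn_invFunOn hxU, ← Complex.conj_conj x]
    exact (hz _ hxU').differentiableAt.conj_conj
  exact (hrefl.comp (z x) hinv).differentiableWithinAt

end SchwarzFunction

lemma AnalyticOnNhd.eqOn_of_preconnected_of_eqOn_arc {E : Type*} [NormedAddCommGroup E]
    [NormedSpace ℂ E] {f g : ℂ → E} {V : Set ℂ} {γ : ℝ → ℂ} {a b : ℝ}
    (hf : AnalyticOnNhd ℂ f V) (hg : AnalyticOnNhd ℂ g V) (hV : IsPreconnected V) (hab : a < b)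
    (hγ : ContinuousOn γ (Ioo a b)) (hγinj : InjOn γ (Ioo a b)) (hγV : MapsTo γ (Ioo a b) V)
    (hfg : ∀ t ∈ Ioo a b, f (γ t) = g (γ t)) : EqOn f g V := by
  have ht₀ : (a + b) / 2 ∈ Ioo a b := ⟨by linarith, by linarith⟩
  have hI : Ioo a b ∈ 𝓝 ((a + b) / 2) := isOpen_Ioo.mem_nhds ht₀
  have htend : Tendsto γ (𝓝[≠] ((a + b) / 2)) (𝓝[≠] (γ ((a + b) / 2))) := by
    refine tendsto_nhdsWithin_iff.2
      ⟨(hγ.continuousAt hI).tendsto.mono_left nhdsWithin_le_nhds, ?_⟩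
    filter_upwards [self_mem_nhdsWithin, nhdsWithin_le_nhds hI] with t ht htI
    exact hγinj.ne htI ht₀ ht
  exact hf.eqOn_of_preconnected_of_frequently_eq hg hV (hγV ht₀)
    (htend.frequently (eventually_of_mem (nhdsWithin_le_nhds hI) hfg).frequently)

theorem schwarz_function_exists_unique_general
    (U : Set ℂ) (hUo : IsOpen U)
    (a b : ℝ) (hab : a < b) (hIU : ∀ t ∈ Set.Ioo a b, (t : ℂ) ∈ U)
    (z : ℂ → ℂ) (hz : DifferentiableOn ℂ z U) (hinj : Set.InjOn z U) :
    (∃ V : Set ℂ, ∃ S : ℂ → ℂ, IsOpen V ∧ (∀ t ∈ Set.Ioo a b, z t ∈ V) ∧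
        DifferentiableOn ℂ S V ∧ ∀ t ∈ Set.Ioo a b, S (z t) = conj (z t)) ∧
    (∀ (V : Set ℂ) (S₁ S₂ : ℂ → ℂ), IsOpen V → IsConnected V →
        (∀ t ∈ Set.Ioo a b, z t ∈ V) →
        DifferentiableOn ℂ S₁ V → DifferentiableOn ℂ S₂ V →
        (∀ t ∈ Set.Ioo a b, S₁ (z t) = conj (z t) ∧ S₂ (z t) = conj (z t)) →
        Set.EqOn S₁ S₂ V) := by
  have hzU : AnalyticOnNhd ℂ z U := hz.analyticOnNhd hUo
  set W : Set ℂ := U ∩ conj ⁻¹' U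
  have hW : IsOpen W := hUo.inter (hUo.preimage Complex.continuous_conj)
  have hIW : ∀ t ∈ Ioo a b, (t : ℂ) ∈ W := fun t ht => ⟨hIU t ht, by simpa using hIU t ht⟩
  refine ⟨⟨z '' W, schwarzFunction U z, ?_, fun t ht => mem_image_of_mem z (hIW t ht),
    differentiableOn_schwarzFunction hzU hUo hinj, fun t ht => ?_⟩, ?_⟩
  · exact (hzU.mono inter_subset_left).isOpen_image_of_injOn hW (hinj.mono inter_subset_left)
  · rw [schwarzFunction_apply hinj (hIU t ht), Complex.conj_ofReal]
  · intro V S₁ S₂ hVo hVc hzV hS₁ hS₂ hS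
    exact (hS₁.analyticOnNhd hVo).eqOn_of_preconnected_of_eqOn_arc (hS₂.analyticOnNhd hVo)
      hVc.isPreconnected hab (hz.continuousOn.comp Complex.continuous_ofReal.continuousOn hIU)
      (fun s hs t ht h => Complex.ofReal_injective (hinj (hIU s hs) (hIU t ht) h)) hzV
      fun t ht => (hS t ht).1.trans (hS t ht).2.symm

/-- Existence and uniqueness of the Schwarz function of an analytic arc: if `z` is an
injective holomorphic function on a connected open set `U ⊆ ℂ` containing a nonempty open
interval `(a, b)` of the real axis, then there is a holomorphic function `S` on an open
neighborhood of the arc `z((a, b))` with `S(z(t)) = conj (z(t))` for all `t ∈ (a, b)`;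
moreover, any two holomorphic functions on a connected open neighborhood of the arc with
this property coincide on that neighborhood. -/
theorem schwarz_function_exists_unique
    (U : Set ℂ) (hUo : IsOpen U) (hUc : IsConnected U)
    (a b : ℝ) (hab : a < b) (hIU : ∀ t ∈ Set.Ioo a b, (t : ℂ) ∈ U)
    (z : ℂ → ℂ) (hz : DifferentiableOn ℂ z U) (hinj : Set.InjOn z U) :
    (∃ V : Set ℂ, ∃ S : ℂ → ℂ, IsOpen V ∧ (∀ t ∈ Set.Ioo a b, z t ∈ V) ∧
        DifferentiableOn ℂ S V ∧ ∀ t ∈ Set.Ioo a b, S (z t) = conj (z t)) ∧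
    (∀ (V : Set ℂ) (S₁ S₂ : ℂ → ℂ), IsOpen V → IsConnected V →
        (∀ t ∈ Set.Ioo a b, z t ∈ V) →
        DifferentiableOn ℂ S₁ V → DifferentiableOn ℂ S₂ V →
        (∀ t ∈ Set.Ioo a b, S₁ (z t) = conj (z t) ∧ S₂ (z t) = conj (z t)) →
        Set.EqOn S₁ S₂ V) :=
  schwarz_function_exists_unique_general U hUo a b hab hIU z hz hinj
end

section
/- Let κ₁ and κ₂ be finite complex linear combinations of the functions z ↦ z^m/(1 - z·conj(a))^(m+2), where a ranges over points of the open unit disc and m over nonnegative integers (these span the Bergman span of the unit disc, since the Bergman kernel of the disc is K(z,w) = 1/(π(1 - z·conj w)²) and these functions are its derivatives in conj w). If κ₁(z)·(i z) = -conj(κ₂(z)·(i z)) for every z with |z| = 1, then κ₁ and κ₂ are identically zero on the open unit disc, and moreover every coefficient in the given linear combinations is zero. (The unit tangent vector to the unit circle at z is T(z) = iz; this is the genus-zero uniqueness statement for elements of the Bergman span on the unit disc.) -/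
/-!
On the unit circle `conj z = z⁻¹`, so `-conj (κ₂(z) · iz) = R(z) · iz` where
`R(z) = ∑ conj c₂(a, m) / (z - a) ^ (m + 2)` has all its poles in the open disc. Hence `κ₁ = R` on
the circle, and by the identity theorem everywhere off the finitely many poles of both sides.
But `κ₁` is holomorphic on a neighbourhood of the closed disc (its poles `1 / conj a` lie outside),
so `R` has no poles: at a pole `a` of maximal order `m + 2`, `(z - a) ^ (m + 2) · R(z)` tends to the
nonzero coefficient, while `(z - a) ^ (m + 2) · κ₁(z)` tends to `0`. Thus `c₂ = 0`, and `c₁ = 0` by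
symmetry.
-/

open ComplexConjugate Filter Topology

noncomputable def bergmanSum (c : ℂ × ℕ →₀ ℂ) (z : ℂ) : ℂ :=
  c.sum fun p coef => coef * (z ^ p.2 / (1 - z * conj p.1) ^ (p.2 + 2))

noncomputable def poleSum (d : ℂ × ℕ →₀ ℂ) (z : ℂ) : ℂ :=
  d.sum fun p coef => coef / (z - p.1) ^ (p.2 + 2)

lemma tendsto_sub_pow_mul_div_sub_pow {a b : ℂ} {m n : ℕ} (coef : ℂ) (hnm : b = a → n ≤ m) :
    Tendsto (fun z => (z - a) ^ (m + 2) * (coef / (z - b) ^ (n + 2))) (𝓝[≠] a)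
      (𝓝 (if (b, n) = (a, m) then coef else 0)) := by
  by_cases hb : b = a
  · subst hb
    have hcont : Continuous fun z => coef * (z - b) ^ (m - n) := by fun_prop
    have hval : coef * (b - b) ^ (m - n) = if (b, n) = (b, m) then coef else 0 := by
      rcases (hnm rfl).lt_or_eq with hlt | rfl
      · simp [hlt.ne, Nat.sub_ne_zero_of_lt hlt]
      · simp
    rw [← hval]
    refine (hcont.tendsto b).mono_left nhdsWithin_le_nhds |>.congr' ?_
    filter_upwards [self_mem_nhdsWithin] with z hz
    have hz : z - b ≠ 0 := sub_ne_zero.2 hz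
    rw [mul_div_assoc', eq_div_iff (pow_ne_zero _ hz), mul_assoc, ← pow_add,
      show m - n + (n + 2) = m + 2 by have := hnm rfl; omega, mul_comm]
  · have hcont : ContinuousAt (fun z => (z - a) ^ (m + 2) * (coef / (z - b) ^ (n + 2))) a :=
      by fun_prop (disch := exact pow_ne_zero _ (sub_ne_zero.2 (Ne.symm hb)))
    simpa [hb] using hcont.tendsto.mono_left nhdsWithin_le_nhds

lemma tendsto_sub_pow_mul_poleSum (d : ℂ × ℕ →₀ ℂ) {a : ℂ} {m : ℕ}
    (hmax : ∀ q ∈ d.support, q.1 = a → q.2 ≤ m) :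
    Tendsto (fun z => (z - a) ^ (m + 2) * poleSum d z) (𝓝[≠] a) (𝓝 (d (a, m))) := by
  classical
  rw [← Finsupp.sum_ite_self_eq' d (a, m)]
  simp only [poleSum, Finsupp.sum, Finset.mul_sum]
  exact tendsto_finsetSum _ fun q hq => tendsto_sub_pow_mul_div_sub_pow (d q) (hmax q hq)

lemma eq_zero_of_poleSum_eventuallyEq {d : ℂ × ℕ →₀ ℂ} {g : ℂ → ℂ}
    (hg : ∀ p ∈ d.support, ContinuousAt g p.1)
    (hd : ∀ p ∈ d.support, poleSum d =ᶠ[𝓝[≠] p.1] g) : d = 0 := by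
  classical
  by_contra hne
  obtain ⟨p, hp⟩ := Finsupp.support_nonempty_iff.2 hne
  obtain ⟨q, hq, hqmax⟩ :=
    (d.support.filter (·.1 = p.1)).exists_max_image Prod.snd ⟨p, by simp [hp]⟩
  rw [Finset.mem_filter] at hq
  have hpole : Tendsto (fun z => (z - q.1) ^ (q.2 + 2) * g z) (𝓝[≠] q.1) (𝓝 (d q)) :=
    (tendsto_sub_pow_mul_poleSum d fun r hr hr₁ => hqmax r (by simp [hr, hr₁, hq.2])).congr'
      ((hd q hq.1).mono fun z hz => by rw [hz])
  have hcont : Tendsto (fun z => (z - q.1) ^ (q.2 + 2) * g z) (𝓝[≠] q.1) (𝓝 0) := by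
    have hgq := hg q hq.1
    have : ContinuousAt (fun z => (z - q.1) ^ (q.2 + 2) * g z) q.1 := by fun_prop
    simpa using this.tendsto.mono_left nhdsWithin_le_nhds
  exact Finsupp.mem_support_iff.1 hq.1 (tendsto_nhds_unique hpole hcont)

lemma neg_conj_bergmanSum_mul_tangent (c : ℂ × ℕ →₀ ℂ) {z : ℂ} (hz : ‖z‖ = 1) :
    -conj (bergmanSum c z * (Complex.I * z)) =
      poleSum (c.mapRange conj (map_zero _)) z * (Complex.I * z) := by
  have hz₀ : z ≠ 0 := by rintro rfl; simp at hz
  have hconj : conj z = z⁻¹ := by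
    rw [Complex.inv_def, Complex.normSq_eq_norm_sq, hz]; simp
  rw [poleSum, Finsupp.sum_mapRange_index (by simp)]
  simp only [bergmanSum, Finsupp.sum, Finset.sum_mul, map_sum, ← Finset.sum_neg_distrib]
  refine Finset.sum_congr rfl fun p _ => ?_
  simp only [map_mul, map_div₀, map_pow, map_sub, map_one, Complex.conj_conj, Complex.conj_I, hconj]
  rw [show 1 - z⁻¹ * p.1 = z⁻¹ * (z - p.1) by field_simp, mul_pow, ← div_div,
    show z⁻¹ ^ p.2 / z⁻¹ ^ (p.2 + 2) = z ^ 2 by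
      rw [pow_add, div_mul_cancel_left₀ (pow_ne_zero _ (inv_ne_zero hz₀))]; simp]
  field_simp

lemma mul_conj_ne_one {z a : ℂ} (hz : ‖z‖ ≤ 1) (ha : ‖a‖ < 1) : z * conj a ≠ 1 := by
  intro h
  have := congrArg norm h
  rw [norm_mul, Complex.norm_conj, norm_one] at this
  nlinarith [norm_nonneg z, norm_nonneg a]

lemma analyticAt_bergmanSum (c : ℂ × ℕ →₀ ℂ) {z : ℂ} (hz : ∀ p ∈ c.support, z * conj p.1 ≠ 1) :
    AnalyticAt ℂ (bergmanSum c) z := by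
  refine Finset.analyticAt_fun_sum _ fun p hp => ?_
  have : 1 - z * conj p.1 ≠ 0 := sub_ne_zero.2 (hz p hp).symm
  fun_prop (disch := exact pow_ne_zero _ this)

lemma analyticAt_poleSum (d : ℂ × ℕ →₀ ℂ) {z : ℂ} (hz : ∀ p ∈ d.support, z ≠ p.1) :
    AnalyticAt ℂ (poleSum d) z := by
  refine Finset.analyticAt_fun_sum _ fun p hp => ?_
  have : z - p.1 ≠ 0 := sub_ne_zero.2 (hz p hp)
  fun_prop (disch := exact pow_ne_zero _ this)

lemma frequently_mem_sphere_nhdsNE_circleMap (c : ℂ) {R : ℝ} (hR : R ≠ 0) (θ : ℝ) :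
    ∃ᶠ z in 𝓝[≠] circleMap c R θ, z ∈ Metric.sphere c |R| :=
  ((hasDerivAt_circleMap c R θ).tendsto_nhdsNE (by simp [hR])).frequently
    (Frequently.of_forall (circleMap_mem_sphere' c R))

lemma bergmanSum_eventuallyEq_poleSum {c d : ℂ × ℕ →₀ ℂ} (hc : ∀ p ∈ c.support, ‖p.1‖ < 1)
    (hd : ∀ p ∈ d.support, ‖p.1‖ < 1) (h : ∀ z : ℂ, ‖z‖ = 1 → bergmanSum c z = poleSum d z) :
    bergmanSum c =ᶠ[cofinite] poleSum d := by
  classical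
  set P : Finset ℂ := c.support.image (fun p => (conj p.1)⁻¹) ∪ d.support.image Prod.fst
  have hU : IsPreconnected (P : Set ℂ)ᶜ :=
    (P.countable_toSet.isPathConnected_compl_of_one_lt_rank (by simp)).isConnected.isPreconnected
  have hbergman : AnalyticOnNhd ℂ (bergmanSum c) (P : Set ℂ)ᶜ := fun z hz =>
    analyticAt_bergmanSum c fun p hp hzp =>
      hz (by simp only [P, Finset.coe_union, Finset.coe_image, Set.mem_union, Set.mem_image]
             exact .inl ⟨p, hp, (eq_inv_of_mul_eq_one_left hzp).symm⟩)
  have hpole : AnalyticOnNhd ℂ (poleSum d) (P : Set ℂ)ᶜ := fun z hz =>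
    analyticAt_poleSum d fun p hp hzp =>
      hz (by simp only [P, Finset.coe_union, Finset.coe_image, Set.mem_union, Set.mem_image]
             exact .inr ⟨p, hp, hzp.symm⟩)
  have h₁ : (1 : ℂ) ∈ (P : Set ℂ)ᶜ := by
    simp only [P, Finset.coe_union, Finset.coe_image, Set.mem_compl_iff, Set.mem_union,
      Set.mem_image, not_or, not_exists, not_and]
    exact ⟨fun p hp h1 => (hc p hp).ne (by rw [← Complex.norm_conj, inv_eq_one.1 h1, norm_one]),
      fun p hp h1 => (hd p hp).ne (by simp [h1])⟩
  have hfreq : ∃ᶠ z in 𝓝[≠] (1 : ℂ), bergmanSum c z = poleSum d z := by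
    rw [show (1 : ℂ) = circleMap 0 1 0 by simp [circleMap]]
    exact (frequently_mem_sphere_nhdsNE_circleMap 0 one_ne_zero 0).mono
      fun z hz => h z (by simpa using hz)
  filter_upwards [P.eventually_cofinite_notMem] with z hz
  exact hbergman.eqOn_of_preconnected_of_frequently_eq hpole hU h₁ hfreq hz

lemma eq_zero_of_tangential_eq {c₁ c₂ : ℂ × ℕ →₀ ℂ} (hs₁ : ∀ p ∈ c₁.support, ‖p.1‖ < 1)
    (hs₂ : ∀ p ∈ c₂.support, ‖p.1‖ < 1)
    (h : ∀ z : ℂ, ‖z‖ = 1 →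
      bergmanSum c₁ z * (Complex.I * z) = -conj (bergmanSum c₂ z * (Complex.I * z))) :
    c₂ = 0 := by
  set d := c₂.mapRange conj (map_zero _)
  have hd : ∀ p ∈ d.support, ‖p.1‖ < 1 := fun p hp => hs₂ p (Finsupp.support_mapRange hp)
  have hcirc : ∀ z : ℂ, ‖z‖ = 1 → bergmanSum c₁ z = poleSum d z := fun z hz =>
    mul_right_cancel₀ (mul_ne_zero Complex.I_ne_zero (by rintro rfl; simp at hz))
      ((h z hz).trans (neg_conj_bergmanSum_mul_tangent c₂ hz))
  have hcofinite := bergmanSum_eventuallyEq_poleSum hs₁ hd hcirc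
  have hd₀ : d = 0 := eq_zero_of_poleSum_eventuallyEq (g := bergmanSum c₁)
    (fun p hp => (analyticAt_bergmanSum c₁ fun q hq =>
      mul_conj_ne_one (hd p hp).le (hs₁ q hq)).continuousAt)
    (fun p _ => (hcofinite.filter_mono (nhdsNE_le_cofinite p.1)).symm)
  exact (Finsupp.mapRange_eq_zero (RingHom.injective _) _).1 hd₀

/-- Linear independence / uniqueness for elements of the Bergman span of the unit disc:
if `κ₁` and `κ₂` are finite linear combinations, with coefficients `c₁ p` and `c₂ p` for
`p = (a, m)` with `a` in the open unit disc, of the Bergman span generators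
`z ↦ z^m / (1 - z * conj a)^(m+2)`, and `κ₁(z)·(iz) = -conj (κ₂(z)·(iz))` on the unit
circle (with `T(z) = iz` the unit tangent), then `κ₁` and `κ₂` vanish identically on the
open unit disc and all the coefficients are zero. -/
theorem bergman_span_tangential_uniqueness
    (c₁ c₂ : ℂ × ℕ →₀ ℂ)
    (hs₁ : ∀ p ∈ c₁.support, ‖p.1‖ < 1)
    (hs₂ : ∀ p ∈ c₂.support, ‖p.1‖ < 1)
    (h : ∀ z : ℂ, ‖z‖ = 1 →
      (c₁.sum fun p coef => coef * (z ^ p.2 / (1 - z * conj p.1) ^ (p.2 + 2)))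
          * (Complex.I * z)
        = -conj ((c₂.sum fun p coef => coef * (z ^ p.2 / (1 - z * conj p.1) ^ (p.2 + 2)))
          * (Complex.I * z))) :
    (∀ z : ℂ, ‖z‖ < 1 →
      (c₁.sum fun p coef => coef * (z ^ p.2 / (1 - z * conj p.1) ^ (p.2 + 2))) = 0 ∧
      (c₂.sum fun p coef => coef * (z ^ p.2 / (1 - z * conj p.1) ^ (p.2 + 2))) = 0) ∧
    c₁ = 0 ∧ c₂ = 0 := by
  have hκ : ∀ z : ℂ, ‖z‖ = 1 →
      bergmanSum c₁ z * (Complex.I * z) = -conj (bergmanSum c₂ z * (Complex.I * z)) := h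
  have hc₂ : c₂ = 0 := eq_zero_of_tangential_eq hs₁ hs₂ hκ
  have hc₁ : c₁ = 0 := eq_zero_of_tangential_eq hs₂ hs₁ fun z hz => by
    rw [hκ z hz, map_neg, Complex.conj_conj, neg_neg]
  subst hc₁ hc₂
  simp
end

section
/- Let P and Q be polynomials in two variables over ℂ with Q(z, conj z) ≠ 0 for every z with |z| = 1. Then there exist a unique constant c ∈ ℂ and unique functions k₁ and k₂, each a finite complex linear combination of the functions z ↦ z^(m+1)/(1 - z·conj(a))^(m+1) with a ranging over the open unit disc and m over nonnegative integers, such that P(z, conj z)/Q(z, conj z) = c + k₁(z) + conj(k₂(z)) for every z with |z| = 1. (These spanning functions are, up to nonzero constant factors, the antiderivatives k_a^m of the Bergman span elements of the unit disc normalized to vanish at 0; this is the partial-fractions-like decomposition ℛ_s = ℂ + 𝐤 + conj(𝐤) for the unit disc.) -/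
/-!
On the unit circle `z̄ = 1 / z`, so `P(z, z̄) / Q(z, z̄)` is a rational function `A(z) / D(z)` of
`z` alone with no poles on the circle, and its partial fraction expansion is a polynomial plus
poles `(z - r)⁻¹ ^ (k + 1)`. Each piece lies in `ℂ + 𝐤 + conj 𝐤` on the circle: `z ^ (m + 1)` is
the generator with `a = 0`; for `|r| < 1` the pole is the conjugate of the generator with
`a = r`; for `|r| > 1` it is, up to a constant, `(1 - z ā) ^ -(k + 1)` with `a = 1 / r̄`, and
expanding `1 / (1 - z ā) = 1 + ā u` binomially in `u = z / (1 - z ā)` gives a constant plus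
generators.

For uniqueness, a vanishing `c + k₁ + conj k₂` is on the circle a rational function with poles
at the `1 / ā` (outside the closed disc) from `k₁` and at the `a` (inside the open disc) from
`conj k₂`; by the identity theorem it vanishes off these poles. At each pole, multiplying by the
highest power of `z - p` that occurs isolates a single coefficient, which must therefore vanish;
the monomials `z ^ (m + 1)` are treated in the same way at `∞` through `z = 1 / w`.
-/

open ComplexConjugate

/-- The generators of the span `𝐤` of the antiderivatives `k_a^m` of the Bergman span
elements of the unit disc normalized to vanish at `0`: up to nonzero constant factors
these are the functions `z ↦ z^(m+1)/(1 - z·conj a)^(m+1)` for `a` in the open unit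
disc and `m` a nonnegative integer. -/
def kGens : Set (ℂ → ℂ) :=
  {f | ∃ (a : ℂ) (m : ℕ), ‖a‖ < 1 ∧
    f = fun z => z ^ (m + 1) / (1 - z * conj a) ^ (m + 1)}

open Polynomial Filter Topology Metric Set Submodule

noncomputable def kGen (a : ℂ) (m : ℕ) : ℂ → ℂ := fun z => z ^ (m + 1) / (1 - z * conj a) ^ (m + 1)

lemma kGen_apply (a z : ℂ) (m : ℕ) : kGen a m z = (z / (1 - z * conj a)) ^ (m + 1) :=
  (div_pow _ _ _).symm

lemma kGen_zero (m : ℕ) (z : ℂ) : kGen 0 m z = z ^ (m + 1) := by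
  simp [kGen]

lemma kGen_mem_span {a : ℂ} (ha : ‖a‖ < 1) (m : ℕ) : kGen a m ∈ span ℂ kGens :=
  subset_span ⟨a, m, ha, rfl⟩

lemma one_sub_mul_conj_ne_zero {z a : ℂ} (hz : ‖z‖ ≤ 1) (ha : ‖a‖ < 1) : 1 - z * conj a ≠ 0 := by
  refine sub_ne_zero.mpr fun h => ?_
  have : ‖z * conj a‖ < 1 := by
    rw [norm_mul, Complex.norm_conj]
    exact mul_lt_one_of_nonneg_of_lt_one_right hz (norm_nonneg a) ha
  rw [← h, norm_one] at this
  exact lt_irrefl _ this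

lemma analyticAt_kGen {a z : ℂ} (h : 1 - z * conj a ≠ 0) (m : ℕ) : AnalyticAt ℂ (kGen a m) z := by
  unfold kGen
  fun_prop (disch := exact pow_ne_zero _ h)

lemma conj_kGen_of_norm_eq_one {a z : ℂ} (ha : ‖a‖ < 1) (hz : ‖z‖ = 1) (m : ℕ) :
    conj (kGen a m z) = ((z - a) ^ (m + 1))⁻¹ := by
  have hz0 : z ≠ 0 := ne_zero_of_norm_ne_zero (hz ▸ one_ne_zero)
  have hza : z - a ≠ 0 := by
    rintro h; rw [← sub_eq_zero.mp h] at ha; linarith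
  rw [kGen_apply, map_pow, map_div₀, map_sub, map_one, map_mul, Complex.conj_conj,
    ← Complex.inv_eq_conj hz, ← inv_pow]
  congr 1
  field_simp

/-- Here `1 / (1 - z ā) = 1 + ā u` with `u = z / (1 - z ā)`, and `u ^ (j + 1) = kGen a j z`. -/
lemma inv_one_sub_mul_conj_pow {a z : ℂ} (h : 1 - z * conj a ≠ 0) (n : ℕ) :
    ((1 - z * conj a) ^ n)⁻¹ =
      1 + ∑ j ∈ Finset.range n, (n.choose (j + 1) * conj a ^ (j + 1)) * kGen a j z := by
  have hinv : (1 - z * conj a)⁻¹ = conj a * (z / (1 - z * conj a)) + 1 := by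
    field_simp; ring
  rw [← inv_pow, hinv, add_pow, Finset.sum_range_succ', add_comm]
  simp only [one_pow, mul_one, pow_zero, Nat.choose_zero_right, Nat.cast_one, kGen_apply]
  congr 1
  refine Finset.sum_congr rfl fun j _ => ?_
  ring

lemma kGen_eq_div_sub_pow {a : ℂ} (ha : a ≠ 0) (m : ℕ) (z : ℂ) :
    kGen a m z = (-((conj a)⁻¹ * z)) ^ (m + 1) / (z - (conj a)⁻¹) ^ (m + 1) := by
  have ha' : conj a ≠ 0 := by simpa using ha
  rw [kGen_apply, ← div_pow]
  congr 1
  by_cases hz : z = (conj a)⁻¹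
  · simp [hz, ha']
  · have hz' : z - (conj a)⁻¹ ≠ 0 := sub_ne_zero.mpr hz
    have hz'' : 1 - z * conj a ≠ 0 := by
      intro h; apply hz; field_simp; linear_combination -h
    rw [div_eq_div_iff hz'' hz']
    field_simp
    ring

lemma exists_finsupp_of_mem_span_kGens {k : ℂ → ℂ} (hk : k ∈ span ℂ kGens) :
    ∃ l : ℂ × ℕ →₀ ℂ, (∀ i ∈ l.support, ‖i.1‖ < 1) ∧
      ∀ z, k z = ∑ i ∈ l.support, l i * kGen i.1 i.2 z := by
  have hgens : kGens = (fun i : ℂ × ℕ => kGen i.1 i.2) '' {i | ‖i.1‖ < 1} := by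
    ext f
    constructor
    · rintro ⟨a, m, ha, rfl⟩
      exact ⟨(a, m), ha, rfl⟩
    · rintro ⟨⟨a, m⟩, ha, rfl⟩
      exact ⟨a, m, ha, rfl⟩
  rw [hgens, Finsupp.mem_span_image_iff_linearCombination] at hk
  obtain ⟨l, hl, rfl⟩ := hk
  exact ⟨l, fun i hi => hl hi, fun z => by
    simp [Finsupp.linearCombination_apply, Finsupp.sum, Finset.sum_apply]⟩

/-- The space `ℂ + 𝐤 + conj 𝐤` of the paper, as functions on the unit circle. -/
def circleDecomp : Submodule ℂ (ℂ → ℂ) where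
  carrier := {f | ∃ c : ℂ, ∃ k₁ ∈ span ℂ kGens, ∃ k₂ ∈ span ℂ kGens,
    EqOn f (fun z => c + k₁ z + conj (k₂ z)) (sphere 0 1)}
  zero_mem' := ⟨0, 0, zero_mem _, 0, zero_mem _, fun z _ => by simp⟩
  add_mem' := by
    rintro f g ⟨c, k₁, hk₁, k₂, hk₂, hf⟩ ⟨c', k₁', hk₁', k₂', hk₂', hg⟩
    refine ⟨c + c', k₁ + k₁', add_mem hk₁ hk₁', k₂ + k₂', add_mem hk₂ hk₂', fun z hz => ?_⟩
    simp only [Pi.add_apply, hf hz, hg hz, map_add]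
    ring
  smul_mem' := by
    rintro s f ⟨c, k₁, hk₁, k₂, hk₂, hf⟩
    refine ⟨s * c, s • k₁, smul_mem _ _ hk₁, conj s • k₂, smul_mem _ _ hk₂, fun z hz => ?_⟩
    simp only [Pi.smul_apply, smul_eq_mul, hf hz, map_mul, Complex.conj_conj]
    ring

namespace circleDecomp

lemma mem_of_eqOn {f g : ℂ → ℂ} (hg : g ∈ circleDecomp) (h : EqOn f g (sphere 0 1)) :
    f ∈ circleDecomp := by
  obtain ⟨c, k₁, hk₁, k₂, hk₂, hg⟩ := hg
  exact ⟨c, k₁, hk₁, k₂, hk₂, h.trans hg⟩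

lemma const_mem (c : ℂ) : (fun _ => c) ∈ circleDecomp :=
  ⟨c, 0, zero_mem _, 0, zero_mem _, fun z _ => by simp⟩

lemma mem_of_mem_span {k : ℂ → ℂ} (hk : k ∈ span ℂ kGens) : k ∈ circleDecomp :=
  ⟨0, k, hk, 0, zero_mem _, fun z _ => by simp⟩

lemma conj_comp_mem {k : ℂ → ℂ} (hk : k ∈ span ℂ kGens) : (fun z => conj (k z)) ∈ circleDecomp :=
  ⟨0, 0, zero_mem _, k, hk, fun z _ => by simp⟩

end circleDecomp

lemma pow_mem_circleDecomp (n : ℕ) : (fun z : ℂ => z ^ n) ∈ circleDecomp := by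
  cases n with
  | zero => simpa using circleDecomp.const_mem 1
  | succ m =>
    exact circleDecomp.mem_of_eqOn (circleDecomp.mem_of_mem_span (kGen_mem_span (a := 0)
      (by simp) m)) fun z _ => (kGen_zero m z).symm

lemma inv_sub_pow_mem_circleDecomp {r : ℂ} (hr : ‖r‖ ≠ 1) (k : ℕ) :
    (fun z => ((z - r) ^ (k + 1))⁻¹) ∈ circleDecomp := by
  rcases hr.lt_or_gt with hr | hr
  · exact circleDecomp.mem_of_eqOn (circleDecomp.conj_comp_mem (kGen_mem_span hr k))
      fun z hz => (conj_kGen_of_norm_eq_one hr (mem_sphere_zero_iff_norm.mp hz) k).symm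
  -- a pole outside the closed disc is a pole `1 / (1 - z ā)` with `a = 1 / r̄` inside it
  set a := (conj r)⁻¹
  have hr0 : r ≠ 0 := by rintro rfl; simp at hr; linarith
  have ha : ‖a‖ < 1 := by simpa [a] using inv_lt_one_of_one_lt₀ hr
  have hca : conj a = r⁻¹ := by simp [a]
  have hmem : (fun z => ((-r)⁻¹) ^ (k + 1) * (1 + ∑ j ∈ Finset.range (k + 1),
      ((k + 1).choose (j + 1) * conj a ^ (j + 1)) * kGen a j z)) ∈ circleDecomp := by
    refine smul_mem _ (((-r)⁻¹) ^ (k + 1)) (add_mem (circleDecomp.const_mem 1) ?_)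
    refine circleDecomp.mem_of_mem_span ?_
    convert sum_mem (t := Finset.range (k + 1)) fun j _ =>
      smul_mem _ ((k + 1).choose (j + 1) * conj a ^ (j + 1)) (kGen_mem_span ha j) using 1
    ext z
    simp
  refine circleDecomp.mem_of_eqOn hmem fun z hz => ?_
  have hz : ‖z‖ ≤ 1 := (mem_sphere_zero_iff_norm.mp hz).le
  rw [← inv_one_sub_mul_conj_pow (one_sub_mul_conj_ne_zero hz ha), ← inv_pow (1 - _),
    ← mul_pow, ← mul_inv, hca, inv_pow]
  congr 2
  field_simp
  ring

def partialFractions (S : Set ℂ) : Submodule ℂ (ℂ → ℂ) :=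
  span ℂ (range (fun n : ℕ => fun z : ℂ => z ^ n) ∪
    {f | ∃ r ∈ S, ∃ k : ℕ, f = fun z => ((z - r) ^ (k + 1))⁻¹})

lemma eval_mem_partialFractions (S : Set ℂ) (A : ℂ[X]) :
    (fun z => A.eval z) ∈ partialFractions S := by
  have hpow (n : ℕ) : (fun z : ℂ => z ^ n) ∈ partialFractions S :=
    subset_span (mem_union_left _ ⟨n, rfl⟩)
  convert sum_mem (t := Finset.range (A.natDegree + 1)) fun n _ =>
    smul_mem _ (A.coeff n) (hpow n) using 1
  ext z
  simp [eval_eq_sum_range]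

lemma exists_div_eq_inv_sub_pow_add_div (A D : ℂ[X]) {r : ℂ} (hD : D.eval r ≠ 0) (k : ℕ) :
    ∃ (c : ℂ) (A' : ℂ[X]), ∀ z, z ≠ r → D.eval z ≠ 0 →
      A.eval z / ((z - r) ^ (k + 1) * D.eval z) =
        c * ((z - r) ^ (k + 1))⁻¹ + A'.eval z / ((z - r) ^ k * D.eval z) := by
  set c := A.eval r / D.eval r
  have hroot : (A - C c * D).IsRoot r := by
    simp only [IsRoot, eval_sub, eval_mul, eval_C, c]
    field_simp
    ring
  obtain ⟨A', hA'⟩ := dvd_iff_isRoot.mpr hroot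
  refine ⟨c, A', fun z hzr hDz => ?_⟩
  have hA := congrArg (eval z) hA'
  simp only [eval_mul, eval_sub, eval_X, eval_C] at hA
  have hzr : z - r ≠ 0 := sub_ne_zero.mpr hzr
  rw [show A.eval z = c * D.eval z + (z - r) * A'.eval z by linear_combination hA]
  field_simp
  ring

lemma exists_mem_partialFractions_eqOn_div {S : Set ℂ} (A : ℂ[X]) {D : ℂ[X]} (hD : D ≠ 0)
    (hS : ∀ r, D.IsRoot r → r ∈ S) :
    ∃ g ∈ partialFractions S, EqOn (fun z => A.eval z / D.eval z) g {z | D.eval z ≠ 0} := by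
  induction hn : D.natDegree using Nat.strong_induction_on generalizing A D with
  | _ n ih =>
  rcases Nat.eq_zero_or_pos n with rfl | hpos
  · rw [eq_C_of_natDegree_eq_zero hn]
    refine ⟨fun z => (A * C (D.coeff 0)⁻¹).eval z, eval_mem_partialFractions S _, fun z _ => ?_⟩
    simp [div_eq_mul_inv]
  obtain ⟨r, hr⟩ := Complex.exists_root (natDegree_pos_iff_degree_pos.mp (hn ▸ hpos))
  obtain ⟨D₂, hDD₂, hndvd⟩ := D.exists_eq_pow_rootMultiplicity_mul_and_not_dvd hD r
  obtain ⟨k, hk⟩ := Nat.exists_eq_add_one.mpr ((rootMultiplicity_pos hD).mpr hr)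
  rw [hk] at hDD₂
  have hD₂r : D₂.eval r ≠ 0 := fun h => hndvd (dvd_iff_isRoot.mpr h)
  have hD₂ : D₂ ≠ 0 := by rintro rfl; simp at hD₂r
  set D' := (X - C r) ^ k * D₂
  have hDD' : D = (X - C r) * D' := by rw [hDD₂]; ring
  have hD' : D' ≠ 0 := mul_ne_zero (pow_ne_zero _ (X_sub_C_ne_zero r)) hD₂
  have hdeg : D'.natDegree < n := by
    rw [← hn, hDD', natDegree_mul (X_sub_C_ne_zero r) hD', natDegree_X_sub_C]
    omega
  obtain ⟨c, A', hsplit⟩ := exists_div_eq_inv_sub_pow_add_div A D₂ hD₂r k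
  obtain ⟨g, hg, hAg⟩ := ih _ hdeg A' hD'
    (fun s hs => hS s (by rw [hDD', IsRoot, eval_mul, hs.eq_zero, mul_zero])) rfl
  refine ⟨c • (fun z => ((z - r) ^ (k + 1))⁻¹) + g,
    add_mem (smul_mem _ c (subset_span (mem_union_right _ ⟨r, hS r hr, k, rfl⟩))) hg,
    fun z hz => ?_⟩
  have hDz : D.eval z = (z - r) ^ (k + 1) * D₂.eval z := by simp [hDD₂]
  have hz' : (z - r) ^ (k + 1) ≠ 0 ∧ D₂.eval z ≠ 0 := mul_ne_zero_iff.mp (hDz ▸ hz)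
  have hzr : z ≠ r := fun h => hz'.1 (by simp [h])
  have hD'z : D'.eval z ≠ 0 := by
    simpa [D', sub_ne_zero.mpr hzr] using hz'.2
  simp only [Pi.add_apply, Pi.smul_apply, smul_eq_mul, hDz, hsplit z hzr hz'.2, ← hAg hD'z]
  simp [D']

lemma partialFractions_le_circleDecomp : partialFractions {r | ‖r‖ ≠ 1} ≤ circleDecomp := by
  refine span_le.mpr (union_subset ?_ ?_)
  · rintro _ ⟨n, rfl⟩
    exact pow_mem_circleDecomp n
  · rintro _ ⟨r, hr, k, rfl⟩
    exact inv_sub_pow_mem_circleDecomp hr k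

/-- The polynomial `X ^ N * P(X, X⁻¹)`, for `N` at least the degree of `P` in its second
variable. -/
noncomputable def toPolyMulXPow (P : MvPolynomial (Fin 2) ℂ) (N : ℕ) : ℂ[X] :=
  ∑ d ∈ P.support, C (P.coeff d) * X ^ (d 0 + (N - d 1))

lemma eval_toPolyMulXPow {P : MvPolynomial (Fin 2) ℂ} {N : ℕ} (hN : P.degreeOf 1 ≤ N) {z : ℂ}
    (hz : z ≠ 0) : (toPolyMulXPow P N).eval z = MvPolynomial.eval ![z, z⁻¹] P * z ^ N := by
  rw [toPolyMulXPow, eval_finsetSum, MvPolynomial.eval_eq', Finset.sum_mul]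
  refine Finset.sum_congr rfl fun d hd => ?_
  have hd1 : d 1 ≤ N := (MvPolynomial.monomial_le_degreeOf 1 hd).trans hN
  simp only [eval_mul, eval_C, eval_pow, eval_X, Fin.prod_univ_two, Matrix.cons_val_zero,
    Matrix.cons_val_one, Matrix.cons_val_fin_one, inv_pow]
  rw [← Nat.sub_add_cancel hd1, pow_add z (N - d 1), Nat.add_sub_cancel, pow_add]
  field_simp

lemma div_mem_circleDecomp (P Q : MvPolynomial (Fin 2) ℂ)
    (hQ : ∀ z : ℂ, ‖z‖ = 1 → MvPolynomial.eval ![z, conj z] Q ≠ 0) :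
    (fun z => MvPolynomial.eval ![z, conj z] P / MvPolynomial.eval ![z, conj z] Q) ∈
      circleDecomp := by
  set N := max (P.degreeOf 1) (Q.degreeOf 1)
  have hcircle {z : ℂ} (hz : ‖z‖ = 1) (R : MvPolynomial (Fin 2) ℂ) (hR : R.degreeOf 1 ≤ N) :
      (toPolyMulXPow R N).eval z = MvPolynomial.eval ![z, conj z] R * z ^ N := by
    rw [eval_toPolyMulXPow hR (ne_zero_of_norm_ne_zero (hz ▸ one_ne_zero)), Complex.inv_eq_conj hz]
  have hD {z : ℂ} (hz : ‖z‖ = 1) : (toPolyMulXPow Q N).eval z ≠ 0 := by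
    rw [hcircle hz Q (le_max_right _ _)]
    exact mul_ne_zero (hQ z hz) (pow_ne_zero _ (ne_zero_of_norm_ne_zero (hz ▸ one_ne_zero)))
  have hD0 : toPolyMulXPow Q N ≠ 0 := fun h => hD (z := 1) (by simp) (by simp [h])
  obtain ⟨g, hg, hAg⟩ := exists_mem_partialFractions_eqOn_div (S := {r | ‖r‖ ≠ 1})
    (toPolyMulXPow P N) hD0 fun r hr hr1 => hD hr1 hr
  refine circleDecomp.mem_of_eqOn (partialFractions_le_circleDecomp hg) fun z hz => ?_
  rw [mem_sphere_zero_iff_norm] at hz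
  rw [← hAg (hD hz)]
  dsimp only
  rw [hcircle hz P (le_max_left _ _), hcircle hz Q (le_max_right _ _),
    mul_div_mul_right _ _ (pow_ne_zero _ (ne_zero_of_norm_ne_zero (hz ▸ one_ne_zero)))]

lemma tendsto_sub_pow_mul_div_sub_pow_of_ne {g : ℂ → ℂ} {x p : ℂ} (hg : ContinuousAt g x)
    (hp : p ≠ x) (n N : ℕ) :
    Tendsto (fun z => (z - x) ^ (N + 1) * (g z / (z - p) ^ (n + 1))) (𝓝[≠] x) (𝓝 0) := by
  have hcont : ContinuousAt (fun z => (z - x) ^ (N + 1) * (g z / (z - p) ^ (n + 1))) x := by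
    fun_prop (disch := exact pow_ne_zero _ (sub_ne_zero.mpr hp.symm))
  simpa using hcont.tendsto.mono_left nhdsWithin_le_nhds

lemma tendsto_sub_pow_mul_div_sub_pow_self {g : ℂ → ℂ} {x : ℂ} (hg : ContinuousAt g x)
    {n N : ℕ} (hn : n ≤ N) :
    Tendsto (fun z => (z - x) ^ (N + 1) * (g z / (z - x) ^ (n + 1))) (𝓝[≠] x)
      (𝓝 (g x * 0 ^ (N - n))) := by
  have hcont : ContinuousAt (fun z => g z * (z - x) ^ (N - n)) x := by fun_prop
  have hlim := hcont.tendsto.mono_left (nhdsWithin_le_nhds (s := {x}ᶜ))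
  rw [sub_self] at hlim
  refine hlim.congr' ?_
  filter_upwards [self_mem_nhdsWithin] with z hz
  have hzx : z - x ≠ 0 := sub_ne_zero.mpr hz
  rw [show N + 1 = (n + 1) + (N - n) by omega, pow_add]
  field_simp

/-- If some pole at `x` had a nonzero coefficient, multiplying by `(z - x) ^ (N + 1)`, for the
highest such order `N + 1`, would leave a nonzero limit at `x`. -/
lemma coeff_eq_zero_of_eventually_eq_zero {ι : Type*} {s : Finset ι} {x : ℂ} {p : ι → ℂ}
    {n : ι → ℕ} {g : ι → ℂ → ℂ} {c : ι → ℂ} {h : ℂ → ℂ} (hh : ContinuousAt h x)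
    (hg : ∀ i ∈ s, ContinuousAt (g i) x) (hgx : ∀ i ∈ s, p i = x → g i x ≠ 0)
    (hinj : InjOn (fun i => (p i, n i)) s)
    (hF : ∀ᶠ z in 𝓝[≠] x, h z + ∑ i ∈ s, c i * (g i z / (z - p i) ^ (n i + 1)) = 0) :
    ∀ i ∈ s, p i = x → c i = 0 := by
  classical
  by_contra! hne
  obtain ⟨i₀, hi₀, hmax⟩ := Finset.exists_max_image (s.filter fun i => p i = x ∧ c i ≠ 0) n
    (let ⟨i, hi, hpi, hci⟩ := hne; ⟨i, Finset.mem_filter.mpr ⟨hi, hpi, hci⟩⟩)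
  obtain ⟨hi₀s, hpi₀, hci₀⟩ := Finset.mem_filter.mp hi₀
  set N := n i₀
  have hterm : ∀ i ∈ s, Tendsto (fun z => c i * ((z - x) ^ (N + 1) *
      (g i z / (z - p i) ^ (n i + 1)))) (𝓝[≠] x) (𝓝 (if i = i₀ then c i₀ * g i₀ x else 0)) := by
    intro i hi
    by_cases hpi : p i ≠ x
    · have hii : i ≠ i₀ := by rintro rfl; exact hpi hpi₀
      simpa [hii] using (tendsto_sub_pow_mul_div_sub_pow_of_ne (hg i hi) hpi _ _).const_mul (c i)
    by_cases hci : c i = 0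
    · have hii : i ≠ i₀ := by rintro rfl; exact hci₀ hci
      simp [hci, hii]
    rw [not_not] at hpi
    have hle : n i ≤ N := hmax i (Finset.mem_filter.mpr ⟨hi, hpi, hci⟩)
    convert (tendsto_sub_pow_mul_div_sub_pow_self (hg i hi) hle).const_mul (c i) using 3
    · rw [hpi]
    · split_ifs with hii
      · simp [hii, N]
      · have hlt : n i < N := hle.lt_of_ne fun hn =>
          hii (hinj hi hi₀s (Prod.ext (hpi.trans hpi₀.symm) hn))
        simp [zero_pow (Nat.sub_ne_zero_of_lt hlt)]
  have hh' : Tendsto (fun z => (z - x) ^ (N + 1) * h z) (𝓝[≠] x) (𝓝 0) := by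
    have hcont : ContinuousAt (fun z => (z - x) ^ (N + 1) * h z) x := by fun_prop
    simpa using hcont.tendsto.mono_left nhdsWithin_le_nhds
  have hlim := hh'.add (tendsto_finsetSum s hterm)
  rw [Finset.sum_ite_eq', if_pos hi₀s, zero_add] at hlim
  refine mul_ne_zero hci₀ (hgx i₀ hi₀s hpi₀) (tendsto_nhds_unique hlim ?_)
  refine tendsto_const_nhds.congr' ?_
  filter_upwards [hF] with z hz
  simp_rw [mul_left_comm (c _)]
  rw [← Finset.mul_sum, ← mul_add, hz, mul_zero]

/-- Substituting `z = 1 / w` turns the monomials into poles at `0`. -/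
lemma eq_zero_of_eventually_const_add_sum_pow_eq_zero {ι : Type*} {γ : ℂ} {s : Finset ι}
    {c : ι → ℂ} {n : ι → ℕ} (hn : InjOn n s)
    (hF : ∀ᶠ z in cofinite, γ + ∑ i ∈ s, c i * z ^ (n i + 1) = 0) :
    γ = 0 ∧ ∀ i ∈ s, c i = 0 := by
  have hinv : ∀ᶠ w in 𝓝[≠] 0, γ + ∑ i ∈ s, c i * (1 / (w - 0) ^ (n i + 1)) = 0 :=
    ((inv_injective.tendsto_cofinite.eventually hF).filter_mono (nhdsNE_le_cofinite 0)).mono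
      fun w hw => by simpa [inv_pow] using hw
  have hc : ∀ i ∈ s, c i = 0 := fun i hi =>
    coeff_eq_zero_of_eventually_eq_zero (p := fun _ => 0) (g := fun _ _ => 1)
      continuousAt_const (fun _ _ => continuousAt_const) (fun _ _ _ => one_ne_zero)
      (fun i hi j hj hij => hn hi hj (congrArg Prod.snd hij)) hinv i hi rfl
  obtain ⟨z, hz⟩ := hF.exists
  rw [Finset.sum_eq_zero fun i hi => by rw [hc i hi, zero_mul], add_zero] at hz
  exact ⟨hz, hc⟩

lemma eq_zero_of_eventually_const_add_sum_kGen_eq_zero {γ : ℂ} {s : Finset (ℂ × ℕ)}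
    {c : ℂ × ℕ → ℂ} (hF : ∀ᶠ z in cofinite, γ + ∑ i ∈ s, c i * kGen i.1 i.2 z = 0) :
    γ = 0 ∧ ∀ i ∈ s, c i = 0 := by
  classical
  set s₀ := s.filter fun i => i.1 = 0
  set s₁ := s.filter fun i => ¬i.1 = 0
  have hF₁ : ∀ᶠ z in cofinite, γ + ∑ i ∈ s₀, c i * z ^ (i.2 + 1) +
      ∑ i ∈ s₁, c i * ((-((conj i.1)⁻¹ * z)) ^ (i.2 + 1) / (z - (conj i.1)⁻¹) ^ (i.2 + 1)) = 0 :=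
    hF.mono fun z hz => by
      rw [← hz, ← Finset.sum_filter_add_sum_filter_not s (fun i => i.1 = 0), add_assoc]
      congr 2 <;> refine Finset.sum_congr rfl fun j hj => ?_
      · rw [(Finset.mem_filter.mp hj).2, kGen_zero]
      · rw [kGen_eq_div_sub_pow (Finset.mem_filter.mp hj).2]
  have hc₁ : ∀ i ∈ s₁, c i = 0 := fun i hi =>
    coeff_eq_zero_of_eventually_eq_zero (p := fun j => (conj j.1)⁻¹) (n := Prod.snd)
      (g := fun j z => (-((conj j.1)⁻¹ * z)) ^ (j.2 + 1)) (by fun_prop) (fun _ _ => by fun_prop)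
      (fun j hj hji => by
        rw [← hji]
        exact pow_ne_zero _ (neg_ne_zero.mpr (mul_self_ne_zero.mpr
          (by simpa using (Finset.mem_filter.mp hj).2))))
      (fun j _ k _ hjk => by
        obtain ⟨h₁, h₂⟩ := Prod.ext_iff.mp hjk
        exact Prod.ext ((starRingEnd ℂ).injective (inv_injective h₁)) h₂)
      (hF₁.filter_mono (nhdsNE_le_cofinite _)) i hi rfl
  obtain ⟨hγ, hc₀⟩ := eq_zero_of_eventually_const_add_sum_pow_eq_zero (s := s₀)
    (fun j hj k hk hjk => Prod.ext (((Finset.mem_filter.mp hj).2).trans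
      (Finset.mem_filter.mp hk).2.symm) hjk)
    (hF₁.mono fun z hz => by
      rwa [Finset.sum_eq_zero (s := s₁) fun i hi => by rw [hc₁ i hi, zero_mul], add_zero] at hz)
  refine ⟨hγ, fun i hi => ?_⟩
  by_cases hi0 : i.1 = 0
  · exact hc₀ i (Finset.mem_filter.mpr ⟨hi, hi0⟩)
  · exact hc₁ i (Finset.mem_filter.mpr ⟨hi, hi0⟩)

lemma analyticAt_sum_kGen (s : Finset (ℂ × ℕ)) (c : ℂ × ℕ → ℂ) {z : ℂ}
    (h : ∀ i ∈ s, 1 - z * conj i.1 ≠ 0) :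
    AnalyticAt ℂ (fun z => ∑ i ∈ s, c i * kGen i.1 i.2 z) z :=
  Finset.analyticAt_fun_sum s fun i hi => analyticAt_const.mul (analyticAt_kGen (h i hi) i.2)

/-- On the unit circle, `γ + k₁ + conj k₂` for `k₁ = ∑ cᵢ • kGen aᵢ mᵢ` and
`k₂ = ∑ conj dⱼ • kGen bⱼ nⱼ` (`conj_kGen_of_norm_eq_one`). -/
noncomputable def circleRat (γ : ℂ) (s t : Finset (ℂ × ℕ)) (c d : ℂ × ℕ → ℂ) (z : ℂ) : ℂ :=
  γ + ∑ i ∈ s, c i * kGen i.1 i.2 z + ∑ i ∈ t, d i * ((z - i.1) ^ (i.2 + 1))⁻¹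

lemma eq_zero_of_eventually_circleRat_eq_zero {γ : ℂ} {s t : Finset (ℂ × ℕ)} {c d : ℂ × ℕ → ℂ}
    (hs : ∀ i ∈ s, ‖i.1‖ < 1) (ht : ∀ i ∈ t, ‖i.1‖ < 1)
    (hF : ∀ᶠ z in cofinite, circleRat γ s t c d z = 0) :
    γ = 0 ∧ (∀ i ∈ s, c i = 0) ∧ ∀ i ∈ t, d i = 0 := by
  have hd : ∀ i ∈ t, d i = 0 := fun i hi =>
    coeff_eq_zero_of_eventually_eq_zero (p := Prod.fst) (n := Prod.snd) (g := fun _ _ => 1)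
      (continuousAt_const.add (analyticAt_sum_kGen s c fun j hj =>
        one_sub_mul_conj_ne_zero (ht i hi).le (hs j hj)).continuousAt)
      (fun _ _ => continuousAt_const) (fun _ _ _ => one_ne_zero)
      (fun _ _ _ _ h => by simpa using h)
      ((hF.filter_mono (nhdsNE_le_cofinite _)).mono fun z hz => by simpa [circleRat] using hz)
      i hi rfl
  obtain ⟨hγ, hc⟩ := eq_zero_of_eventually_const_add_sum_kGen_eq_zero (hF.mono fun z hz => by
    rwa [circleRat, Finset.sum_eq_zero (s := t) fun i hi => by rw [hd i hi, zero_mul],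
      add_zero] at hz)
  exact ⟨hγ, hc, hd⟩

lemma eventually_cofinite_eq_zero_of_eqOn {f : ℂ → ℂ} {E K : Set ℂ} {z₀ : ℂ} (hE : E.Finite)
    (hf : AnalyticOnNhd ℂ f Eᶜ) (hK : IsPreconnected K) (hK' : K.Nontrivial) (hz₀ : z₀ ∈ K)
    (hz₀E : z₀ ∉ E) (h : EqOn f 0 K) : ∀ᶠ z in cofinite, f z = 0 := by
  have hE' : IsPreconnected Eᶜ := (hE.countable.isConnected_compl_of_one_lt_rank
    (by simp [Complex.rank_real_complex])).isPreconnected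
  have hfreq : ∃ᶠ z in 𝓝[≠] z₀, f z = 0 :=
    (accPt_iff_frequently_nhdsNE.mp (hK.preperfect_of_nontrivial hK' z₀ hz₀)).mono
      fun z hz => h hz
  have hzero := hf.eqOn_zero_of_preconnected_of_frequently_eq_zero hE' hz₀E hfreq
  exact eventually_cofinite.mpr (hE.subset fun z hz => by_contra fun hzE => hz (hzero hzE))

/-- The identity theorem on `ℂ` minus the poles `1 / āᵢ` and `bⱼ`, none of which lies on the
unit circle. -/
lemma eventually_cofinite_circleRat_eq_zero {γ : ℂ} {s t : Finset (ℂ × ℕ)} {c d : ℂ × ℕ → ℂ}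
    (hs : ∀ i ∈ s, ‖i.1‖ < 1) (ht : ∀ i ∈ t, ‖i.1‖ < 1)
    (h : EqOn (circleRat γ s t c d) 0 (sphere 0 1)) :
    ∀ᶠ z in cofinite, circleRat γ s t c d z = 0 := by
  set E : Set ℂ := ↑(s.image (fun i => (conj i.1)⁻¹) ∪ t.image Prod.fst)
  have hE (z : ℂ) : z ∉ E ↔ (∀ i ∈ s, z ≠ (conj i.1)⁻¹) ∧ ∀ i ∈ t, z ≠ i.1 := by
    simp only [E, Finset.coe_union, Finset.coe_image, mem_union, mem_image, Finset.mem_coe]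
    grind
  have hRE : AnalyticOnNhd ℂ (circleRat γ s t c d) Eᶜ := fun z hz => by
    obtain ⟨hzs, hzt⟩ := (hE z).mp hz
    refine (analyticAt_const.add (analyticAt_sum_kGen _ _ fun i hi h0 => hzs i hi ?_)).add
      (Finset.analyticAt_fun_sum _ fun i hi => analyticAt_const.mul ?_)
    · exact eq_inv_of_mul_eq_one_left (by linear_combination -h0)
    · fun_prop (disch := exact pow_ne_zero _ (sub_ne_zero.mpr (hzt i hi)))
  have h1E : (1 : ℂ) ∉ E := by
    refine (hE 1).mpr ⟨fun i hi h1 => ?_, fun i hi h1 => ?_⟩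
    · have := hs i hi
      rw [eq_comm, inv_eq_one, map_eq_one_iff _ (starRingEnd ℂ).injective] at h1
      simp [h1] at this
    · have := ht i hi
      simp [← h1] at this
  exact eventually_cofinite_eq_zero_of_eqOn (Finset.finite_toSet _) hRE
    (isConnected_sphere (by simp [Complex.rank_real_complex]) 0 zero_le_one).isPreconnected
    ⟨1, by simp, -1, by simp, by norm_num⟩ (by simp) h1E h

lemma eq_zero_of_eqOn_sphere {c : ℂ} {k₁ k₂ : ℂ → ℂ} (hk₁ : k₁ ∈ span ℂ kGens)
    (hk₂ : k₂ ∈ span ℂ kGens) (h : EqOn (fun z => c + k₁ z + conj (k₂ z)) 0 (sphere 0 1)) :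
    c = 0 ∧ k₁ = 0 ∧ k₂ = 0 := by
  obtain ⟨l₁, hl₁, hk₁⟩ := exists_finsupp_of_mem_span_kGens hk₁
  obtain ⟨l₂, hl₂, hk₂⟩ := exists_finsupp_of_mem_span_kGens hk₂
  have hR : EqOn (circleRat c l₁.support l₂.support l₁ (conj ∘ l₂)) 0 (sphere 0 1) :=
    fun z hz => by
      rw [← h hz]
      simp only [circleRat, hk₁, hk₂, map_sum, map_mul, Function.comp_apply]
      congr 1
      exact Finset.sum_congr rfl fun i hi => by
        rw [conj_kGen_of_norm_eq_one (hl₂ i hi) (mem_sphere_zero_iff_norm.mp hz)]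
  obtain ⟨hc, hl₁0, hl₂0⟩ := eq_zero_of_eventually_circleRat_eq_zero hl₁ hl₂
    (eventually_cofinite_circleRat_eq_zero hl₁ hl₂ hR)
  refine ⟨hc, funext fun z => ?_, funext fun z => ?_⟩
  · rw [hk₁, Finset.sum_eq_zero fun i hi => by rw [hl₁0 i hi, zero_mul], Pi.zero_apply]
  · rw [hk₂, Finset.sum_eq_zero fun i hi => by rw [(map_eq_zero _).mp (hl₂0 i hi), zero_mul],
      Pi.zero_apply]

lemma eq_of_eqOn_sphere {c c' : ℂ} {k₁ k₂ k₁' k₂' : ℂ → ℂ} (hk₁ : k₁ ∈ span ℂ kGens)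
    (hk₂ : k₂ ∈ span ℂ kGens) (hk₁' : k₁' ∈ span ℂ kGens) (hk₂' : k₂' ∈ span ℂ kGens)
    (h : EqOn (fun z => c + k₁ z + conj (k₂ z)) (fun z => c' + k₁' z + conj (k₂' z))
      (sphere 0 1)) :
    c = c' ∧ k₁ = k₁' ∧ k₂ = k₂' := by
  obtain ⟨hc, hk₁₁, hk₂₂⟩ := eq_zero_of_eqOn_sphere (c := c - c') (sub_mem hk₁ hk₁')
    (sub_mem hk₂ hk₂') fun z hz => by
      simp only [Pi.sub_apply, map_sub, Pi.zero_apply]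
      linear_combination h hz
  exact ⟨sub_eq_zero.mp hc, sub_eq_zero.mp hk₁₁, sub_eq_zero.mp hk₂₂⟩

/-- The partial-fractions-like decomposition `ℛ_s = ℂ + 𝐤 + conj 𝐤` on the unit disc:
the restriction to the unit circle of a rational function `P(z, z̄)/Q(z, z̄)` with
nonvanishing denominator on the circle has a unique decomposition `c + k₁ + conj k₂`
with `c` a constant and `k₁, k₂` in the span `𝐤` of the normalized antiderivatives of
the Bergman span of the disc. -/
theorem partial_fractions_decomposition_unit_disc
    (P Q : MvPolynomial (Fin 2) ℂ)
    (hQ : ∀ z : ℂ, ‖z‖ = 1 → MvPolynomial.eval ![z, conj z] Q ≠ 0) :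
    ∃! ckk : ℂ × (ℂ → ℂ) × (ℂ → ℂ),
      ckk.2.1 ∈ Submodule.span ℂ kGens ∧ ckk.2.2 ∈ Submodule.span ℂ kGens ∧
      ∀ z : ℂ, ‖z‖ = 1 →
        MvPolynomial.eval ![z, conj z] P / MvPolynomial.eval ![z, conj z] Q
          = ckk.1 + ckk.2.1 z + conj (ckk.2.2 z) := by
  obtain ⟨c, k₁, hk₁, k₂, hk₂, hPQ⟩ := div_mem_circleDecomp P Q hQ
  refine ⟨(c, k₁, k₂), ⟨hk₁, hk₂, fun z hz => hPQ (mem_sphere_zero_iff_norm.mpr hz)⟩, ?_⟩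
  rintro ⟨c', k₁', k₂'⟩ ⟨hk₁', hk₂', h'⟩
  obtain ⟨rfl, rfl, rfl⟩ := eq_of_eqOn_sphere hk₁' hk₂' hk₁ hk₂ fun z hz =>
    (h' z (mem_sphere_zero_iff_norm.mp hz)).symm.trans (hPQ hz)
  rfl
end
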